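/- arXiv:1804.06877 — 7 statements merged into one kernel-verified Lean document; each statement's English description precedes it below -/
import Mathlib

section
/- The number p = (1/3)·(2 − 11·(2/(9√93 − 47))^{1/3} + ((9√93 − 47)/2)^{1/3}) lies in (0, 1/4] and is the unique solution p ∈ (0, 1/4] of the equation ((1 + √(1 − 4p))/2)^4 = p. -/
/-- The number
`p = (1/3)(2 - 11 (2/(9√93 - 47))^{1/3} + ((9√93 - 47)/2)^{1/3})`
lies in `(0, 1/4]` and is the unique solution `p ∈ (0, 1/4]` of
`((1 + √(1 - 4p))/2)^4 = p`. -/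
theorem solution_d_four :
    (1 / 3 * (2 - 11 * (2 / (9 * Real.sqrt 93 - 47)) ^ ((1 : ℝ) / 3)
        + ((9 * Real.sqrt 93 - 47) / 2) ^ ((1 : ℝ) / 3))) ∈ Set.Ioc (0 : ℝ) (1 / 4) ∧
    ((1 + Real.sqrt (1 - 4 * (1 / 3 * (2 - 11 * (2 / (9 * Real.sqrt 93 - 47)) ^ ((1 : ℝ) / 3)
        + ((9 * Real.sqrt 93 - 47) / 2) ^ ((1 : ℝ) / 3))))) / 2) ^ 4
      = 1 / 3 * (2 - 11 * (2 / (9 * Real.sqrt 93 - 47)) ^ ((1 : ℝ) / 3)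
        + ((9 * Real.sqrt 93 - 47) / 2) ^ ((1 : ℝ) / 3)) ∧
    ∀ p : ℝ, p ∈ Set.Ioc (0 : ℝ) (1 / 4) →
      ((1 + Real.sqrt (1 - 4 * p)) / 2) ^ 4 = p →
      p = 1 / 3 * (2 - 11 * (2 / (9 * Real.sqrt 93 - 47)) ^ ((1 : ℝ) / 3)
        + ((9 * Real.sqrt 93 - 47) / 2) ^ ((1 : ℝ) / 3)) := by
  set s : ℝ := Real.sqrt 93 with hs_def
  have hs : s ^ 2 = 93 := Real.sq_sqrt (by norm_num)
  have hs0 : 0 ≤ s := Real.sqrt_nonneg _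
  have hs9 : 9 < s := by nlinarith
  have hA : 0 < 9 * s - 47 := by nlinarith
  have hA2 : 0 < (9 * s - 47) / 2 := by linarith
  set t : ℝ := ((9 * s - 47) / 2) ^ ((1 : ℝ) / 3) with ht_def
  set u : ℝ := (2 / (9 * s - 47)) ^ ((1 : ℝ) / 3) with hu_def
  have ht_pos : 0 < t := Real.rpow_pos_of_pos hA2 _
  have hc3 : t ^ 3 = (9 * s - 47) / 2 := by
    rw [ht_def, ← Real.rpow_natCast (((9 * s - 47) / 2) ^ ((1 : ℝ) / 3)) 3,
      ← Real.rpow_mul hA2.le]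
    norm_num
  have hut : t * u = 1 := by
    rw [ht_def, hu_def, ← Real.mul_rpow hA2.le (by positivity)]
    rw [show (9 * s - 47) / 2 * (2 / (9 * s - 47)) = 1 by field_simp]
    simp
  set p : ℝ := 1 / 3 * (2 - 11 * u + t) with hp_def
  have h1 : u ^ 3 * ((9 * s - 47) / 2) = 1 := by
    rw [← hc3]; linear_combination (u ^ 2 * t ^ 2 + u * t + 1) * hut
  have hu3 : u ^ 3 = (9 * s + 47) / 2662 := by
    linear_combination ((9 * s + 47) / 2662) * h1 - (81 / 5324) * u ^ 3 * hs
  have hp_cubic : p ^ 3 - 2 * p ^ 2 + 5 * p - 1 = 0 := by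
    rw [hp_def]
    linear_combination (1 / 27) * hc3 - (1331 / 27) * hu3 - (11 / 9) * (t - 11 * u) * hut
  have hp_pos : 0 < p := by nlinarith [sq_nonneg (p - 1)]
  have hp_le : p ≤ 1 / 4 := by nlinarith [sq_nonneg (p - 1 / 4), sq_nonneg p, sq_nonneg (p + 1)]
  have h4p : 0 ≤ 1 - 4 * p := by linarith
  have hr2 : Real.sqrt (1 - 4 * p) ^ 2 = 1 - 4 * p := Real.sq_sqrt h4p
  have hr0 : 0 ≤ Real.sqrt (1 - 4 * p) := Real.sqrt_nonneg _
  set r : ℝ := Real.sqrt (1 - 4 * p) with hr_def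
  have hrl : r * (1 - 2 * p) = p - p ^ 3 := by
    have hsq : (r * (1 - 2 * p)) ^ 2 = (p - p ^ 3) ^ 2 := by
      linear_combination (1 - 2 * p) ^ 2 * hr2 + (3 * p - 1 - 2 * p ^ 2 - p ^ 3) * hp_cubic
    have ha : 0 ≤ r * (1 - 2 * p) := mul_nonneg hr0 (by linarith)
    have hb : 0 ≤ p - p ^ 3 := by nlinarith
    have h0 : (r * (1 - 2 * p) - (p - p ^ 3)) * (r * (1 - 2 * p) + (p - p ^ 3)) = 0 := by
      linear_combination hsq
    rcases mul_eq_zero.mp h0 with h | h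
    · linarith
    · linarith
  refine ⟨⟨hp_pos, hp_le⟩, ?_, ?_⟩
  · linear_combination (1 / 16) * (r ^ 2 + 4 * r + 7 - 4 * p) * hr2 + (1 / 2) * hrl
      - (1 / 2) * hp_cubic
  · intro q hq heq
    obtain ⟨hq0, hq4⟩ := hq
    have h4q : 0 ≤ 1 - 4 * q := by linarith
    have hr'2 : Real.sqrt (1 - 4 * q) ^ 2 = 1 - 4 * q := Real.sq_sqrt h4q
    set r' : ℝ := Real.sqrt (1 - 4 * q) with hr'_def
    have hq_rl : r' * (1 - 2 * q) = 6 * q - 1 - 2 * q ^ 2 := by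
      linear_combination 2 * heq - (1 / 8) * (r' ^ 2 + 4 * r' + 7 - 4 * q) * hr'2
    have h4 : 4 * q * (q ^ 3 - 2 * q ^ 2 + 5 * q - 1) = 0 := by
      linear_combination (1 - 2 * q) ^ 2 * hr'2
        - (r' * (1 - 2 * q) + (6 * q - 1 - 2 * q ^ 2)) * hq_rl
    have hq_cubic : q ^ 3 - 2 * q ^ 2 + 5 * q - 1 = 0 := by
      rcases mul_eq_zero.mp h4 with h | h
      · exfalso; linarith
      · exact h
    have hfac : (q - p) * (q ^ 2 + q * p + p ^ 2 - 2 * q - 2 * p + 5) = 0 := by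
      linear_combination hq_cubic - hp_cubic
    rcases mul_eq_zero.mp hfac with h | h
    · linarith
    · exfalso; linarith [sq_nonneg q, sq_nonneg p, (mul_pos hq0 hp_pos)]
end

section
/- For each integer d ≥ 2, let p_d denote the unique solution p ∈ (0, 1/4] of the equation ((1 + √(1 − 4p))/2)^d = p. Then p_d is asymptotic to (ln d)/d as d → ∞; that is, lim_{d→∞} d·p_d/ln d = 1. -/
/-!
With `B q = (1 + √(1 - 4q)) / 2`, the map `q ↦ B q ^ d` is antitone, so its fixed point `p d` lies
below every `a` with `B a ^ d ≤ a` and above every `b` with `b ≤ B b ^ d`. Since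
`B q = 1 - q + O(q²)`, we have `B q ^ d ≈ exp (-d q)`, which at `q = c log d / d` is about `d ^ (-c)`:
below `q` for `c > 1`, and above `q` for `c < 1` once `d` is large.
-/

open Filter Real

lemma Antitone.le_of_apply_le {α : Type*} [LinearOrder α] {f : α → α} {p a : α}
    (hf : Antitone f) (hp : f p = p) (ha : f a ≤ a) : p ≤ a := by
  by_contra! h
  have : p ≤ f a := hp ▸ hf h.le
  exact (this.trans ha).not_gt h

lemma Antitone.le_of_le_apply {α : Type*} [LinearOrder α] {f : α → α} {p b : α}
    (hf : Antitone f) (hp : f p = p) (hb : b ≤ f b) : b ≤ p := by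
  by_contra! h
  have : f b ≤ p := hp ▸ hf h.le
  exact (hb.trans this).not_gt h

lemma tendsto_div_nhds_one_of_eventually_bounds {ι : Type*} {l : Filter ι} {f g : ι → ℝ}
    (hg : ∀ᶠ x in l, 0 < g x) (hlow : ∀ c ∈ Set.Ioo (0 : ℝ) 1, ∀ᶠ x in l, c * g x ≤ f x)
    (hup : ∀ c > (1 : ℝ), ∀ᶠ x in l, f x ≤ c * g x) :
    Tendsto (fun x => f x / g x) l (nhds 1) := by
  refine tendsto_order.2 ⟨fun a ha => ?_, fun a ha => ?_⟩
  · obtain ⟨c, hac, hc1⟩ := exists_between (max_lt ha one_pos)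
    filter_upwards [hg, hlow c ⟨(le_max_right _ _).trans_lt hac, hc1⟩] with x hgx hx
    exact (le_max_left _ _).trans_lt hac |>.trans_le ((le_div_iff₀ hgx).2 hx)
  · obtain ⟨c, h1c, hca⟩ := exists_between ha
    filter_upwards [hg, hup c h1c] with x hgx hx
    exact ((div_le_iff₀ hgx).2 hx).trans_lt hca

lemma tendsto_log_natCast_atTop : Tendsto (fun d : ℕ => log d) atTop atTop :=
  tendsto_log_atTop.comp tendsto_natCast_atTop_atTop

lemma tendsto_mul_log_div_natCast (c : ℝ) :
    Tendsto (fun d : ℕ => c * log d / d) atTop (nhds 0) := by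
  have := (isLittleO_log_id_atTop.tendsto_div_nhds_zero.comp
    tendsto_natCast_atTop_atTop).const_mul c
  simpa only [mul_zero, mul_div_assoc, Function.comp_def, id] using this

lemma le_exp_mul {s x : ℝ} (hs : 0 < s) (hx : 2 / s ^ 2 ≤ x) : x ≤ exp (s * x) := by
  have hx0 : 0 ≤ x := le_trans (by positivity) hx
  have := pow_div_factorial_le_exp (s * x) (by positivity) 2
  rw [div_le_iff₀ (by positivity)] at hx
  norm_num [Nat.factorial] at this
  nlinarith

/-- The larger root of `x ^ 2 - x + q`. -/
noncomputable def largerRoot (q : ℝ) : ℝ := (1 + √(1 - 4 * q)) / 2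

lemma largerRoot_nonneg (q : ℝ) : 0 ≤ largerRoot q := by
  unfold largerRoot; positivity

lemma antitone_largerRoot : Antitone largerRoot := fun _ _ hab => by
  unfold largerRoot; gcongr

lemma antitone_largerRoot_pow (n : ℕ) : Antitone fun q => largerRoot q ^ n :=
  fun _ _ hab => pow_le_pow_left₀ (largerRoot_nonneg _) (antitone_largerRoot hab) n

lemma largerRoot_le_exp_neg {a : ℝ} (ha : a ≤ 1 / 2) : largerRoot a ≤ exp (-a) := by
  have hsqrt : √(1 - 4 * a) ≤ 1 - 2 * a := sqrt_le_iff.2 ⟨by linarith, by nlinarith [sq_nonneg a]⟩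
  calc largerRoot a ≤ 1 - a := by unfold largerRoot; linarith
    _ ≤ exp (-a) := one_sub_le_exp_neg a

lemma exp_neg_le_largerRoot {b : ℝ} (hb0 : 0 ≤ b) (hb : b ≤ 1 / 4) :
    exp (-(b / (1 - 3 * b))) ≤ largerRoot b := by
  have h3b : 0 < 1 - 3 * b := by linarith
  have h2b : 0 < 1 - 2 * b := by linarith
  set s := √(1 - 4 * b)
  have hs0 : 0 ≤ s := sqrt_nonneg _
  have hs2 : s ^ 2 = 1 - 4 * b := sq_sqrt (by linarith)
  have hs1 : s ≤ 1 - 2 * b := by nlinarith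
  -- `1 - largerRoot b = 2b / (1 + s)` and `s ≥ 1 - 4b`
  have hroot : (1 - 3 * b) / (1 - 2 * b) ≤ largerRoot b := by
    rw [div_le_iff₀ h2b, largerRoot]; nlinarith
  calc exp (-(b / (1 - 3 * b))) = (exp (b / (1 - 3 * b)))⁻¹ := exp_neg _
    _ ≤ ((1 - 2 * b) / (1 - 3 * b))⁻¹ := by
        gcongr
        calc (1 - 2 * b) / (1 - 3 * b) = b / (1 - 3 * b) + 1 := by
              rw [div_add_one h3b.ne']; ring_nf
            _ ≤ _ := add_one_le_exp _
    _ = (1 - 3 * b) / (1 - 2 * b) := inv_div _ _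
    _ ≤ largerRoot b := hroot

lemma eventually_pow_largerRoot_le {c : ℝ} (hc : 1 < c) :
    ∀ᶠ d : ℕ in atTop, largerRoot (c * log d / d) ^ d ≤ c * log d / d := by
  filter_upwards [eventually_gt_atTop 0, tendsto_log_natCast_atTop.eventually_ge_atTop 1,
    (tendsto_mul_log_div_natCast c).eventually (eventually_le_nhds (by norm_num : (0 : ℝ) < 1 / 2))]
    with d hd hL ha
  have hd' : (0 : ℝ) < d := by exact_mod_cast hd
  calc largerRoot (c * log d / d) ^ d ≤ exp (-(c * log d / d)) ^ d :=
        pow_le_pow_left₀ (largerRoot_nonneg _) (largerRoot_le_exp_neg ha) d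
    _ = exp (-(c * log d)) := by rw [← exp_nat_mul]; congr 1; field_simp
    _ ≤ exp (-log d) := exp_le_exp.2 (by nlinarith)
    _ = 1 / d := by rw [exp_neg, exp_log hd', one_div]
    _ ≤ c * log d / d := by gcongr; nlinarith

lemma eventually_le_pow_largerRoot {c : ℝ} (hc0 : 0 < c) (hc1 : c < 1) :
    ∀ᶠ d : ℕ in atTop, c * log d / d ≤ largerRoot (c * log d / d) ^ d := by
  -- Half of the gap `1 - c` absorbs the error in `b / (1 - 3b) ≈ b`, the other half the factor `log d`.
  have hs : 0 < (1 - c) / 2 := by linarith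
  filter_upwards [eventually_gt_atTop 0,
    tendsto_log_natCast_atTop.eventually_ge_atTop (2 / ((1 - c) / 2) ^ 2),
    (tendsto_mul_log_div_natCast c).eventually (eventually_le_nhds (by linarith : 0 < (1 - c) / 12))]
    with d hd hL hb
  have hd' : (0 : ℝ) < d := by exact_mod_cast hd
  set L := log d with hL_def
  set b := c * L / d
  have hL0 : 0 ≤ L := le_trans (by positivity) hL
  have hb0 : 0 ≤ b := by positivity
  have h3b : 0 < 1 - 3 * b := by linarith
  have hexponent : d * (b / (1 - 3 * b)) ≤ (1 - (1 - c) / 2) * L := by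
    have hdb : d * b = c * L := mul_div_cancel₀ _ hd'.ne'
    have hgap : c ≤ (1 - (1 - c) / 2) * (1 - 3 * b) := by
      nlinarith [mul_le_mul_of_nonneg_left hb (by linarith : (0 : ℝ) ≤ 1 + c)]
    rw [← mul_div_assoc, hdb, div_le_iff₀ h3b]
    nlinarith [mul_le_mul_of_nonneg_right hgap hL0]
  calc b ≤ L / d := div_le_div_of_nonneg_right (by nlinarith) hd'.le
    _ ≤ exp ((1 - c) / 2 * L) / d := by gcongr; exact le_exp_mul hs hL
    _ = exp (-((1 - (1 - c) / 2) * L)) := by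
        rw [div_eq_mul_inv, ← exp_log hd', ← exp_neg, ← exp_add, ← hL_def]; ring_nf
    _ ≤ exp (-(d * (b / (1 - 3 * b)))) := exp_le_exp.2 (neg_le_neg hexponent)
    _ = exp (-(b / (1 - 3 * b))) ^ d := by rw [← exp_nat_mul]; ring_nf
    _ ≤ largerRoot b ^ d :=
        pow_le_pow_left₀ (exp_pos _).le (exp_neg_le_largerRoot hb0 (by linarith)) d

lemma eventually_natCast_mul_le_of_pow_largerRoot_eq {p : ℕ → ℝ}
    (hp : ∀ᶠ d in atTop, largerRoot (p d) ^ d = p d) {c : ℝ} (hc : 1 < c) :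
    ∀ᶠ d : ℕ in atTop, d * p d ≤ c * log d := by
  filter_upwards [hp, eventually_pow_largerRoot_le hc, eventually_gt_atTop 0] with d hpd hd hd0
  have := (antitone_largerRoot_pow d).le_of_apply_le hpd hd
  rw [le_div_iff₀ (by exact_mod_cast hd0)] at this
  linarith

lemma eventually_le_natCast_mul_of_pow_largerRoot_eq {p : ℕ → ℝ}
    (hp : ∀ᶠ d in atTop, largerRoot (p d) ^ d = p d) {c : ℝ} (hc0 : 0 < c) (hc1 : c < 1) :
    ∀ᶠ d : ℕ in atTop, c * log d ≤ d * p d := by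
  filter_upwards [hp, eventually_le_pow_largerRoot hc0 hc1, eventually_gt_atTop 0]
    with d hpd hd hd0
  have := (antitone_largerRoot_pow d).le_of_le_apply hpd hd
  rw [div_le_iff₀ (by exact_mod_cast hd0)] at this
  linarith

/-- Let `p d` be the unique solution `p ∈ (0, 1/4]` of
`((1 + √(1 - 4p))/2)^d = p` for each `d ≥ 2`. Then `p d ∼ (ln d)/d` as `d → ∞`,
i.e. `d * p d / ln d → 1`. -/
theorem star_critical_asymptotics (p : ℕ → ℝ)
    (hp : ∀ d : ℕ, 2 ≤ d → p d ∈ Set.Ioc (0 : ℝ) (1 / 4) ∧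
      ((1 + Real.sqrt (1 - 4 * p d)) / 2) ^ d = p d) :
    Tendsto (fun d : ℕ => (d : ℝ) * p d / Real.log d) atTop (nhds 1) := by
  have hfix : ∀ᶠ d in atTop, largerRoot (p d) ^ d = p d :=
    (eventually_ge_atTop 2).mono fun d hd => (hp d hd).2
  exact tendsto_div_nhds_one_of_eventually_bounds
    (tendsto_log_natCast_atTop.eventually_gt_atTop 0)
    (fun c hc => eventually_le_natCast_mul_of_pow_largerRoot_eq hfix hc.1 hc.2)
    (fun c hc => eventually_natCast_mul_le_of_pow_largerRoot_eq hfix hc)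
end

section
/- For each integer d ≥ 4, there exists exactly one real number p ∈ (0, 1/4] satisfying (1/2)·(1 − p)^{d−1}·(1 + √(1 − 4p)) = p. -/
/-- For each integer `d ≥ 4`, there exists exactly one real number
`p ∈ (0, 1/4]` satisfying `(1/2)(1 - p)^{d-1}(1 + √(1 - 4p)) = p`. -/
theorem exists_unique_solution_pstar (d : ℕ) (hd : 4 ≤ d) :
    ∃! p : ℝ, p ∈ Set.Ioc (0 : ℝ) (1 / 4) ∧
      1 / 2 * (1 - p) ^ (d - 1) * (1 + Real.sqrt (1 - 4 * p)) = p := by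
  set f : ℝ → ℝ := fun p => 1 / 2 * (1 - p) ^ (d - 1) * (1 + Real.sqrt (1 - 4 * p)) - p with hf
  have hcont : Continuous f := by
    apply Continuous.sub
    · exact (continuous_const.mul ((continuous_const.sub continuous_id).pow _)).mul
        (continuous_const.add (Real.continuous_sqrt.comp
          (continuous_const.sub (continuous_const.mul continuous_id))))
    · exact continuous_id
  have hd1 : d - 1 ≠ 0 := by omega
  have hd3 : 3 ≤ d - 1 := by omega
  have hfa : f 0 = 1 := by simp [hf]; norm_num
  have hfb : f (1 / 4) < 0 := by
    have h1 : Real.sqrt (1 - 4 * (1 / 4)) = 0 := by norm_num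
    have h2 : ((1 : ℝ) - 1 / 4) ^ (d - 1) ≤ (3 / 4 : ℝ) ^ 3 := by
      calc ((1 : ℝ) - 1 / 4) ^ (d - 1) = (3 / 4 : ℝ) ^ (d - 1) := by norm_num
        _ ≤ (3 / 4 : ℝ) ^ 3 := pow_le_pow_of_le_one (by norm_num) (by norm_num) hd3
    simp only [hf, h1]
    nlinarith
  -- strict monotonicity (decreasing) of the left-hand side
  have key : ∀ p q : ℝ, 0 < p → p < q → q ≤ 1 / 4 →
      1 / 2 * (1 - q) ^ (d - 1) * (1 + Real.sqrt (1 - 4 * q)) <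
        1 / 2 * (1 - p) ^ (d - 1) * (1 + Real.sqrt (1 - 4 * p)) := by
    intro p q hp hpq hq
    have h1 : (0 : ℝ) ≤ 1 - q := by linarith
    have h2 : (1 - q) ^ (d - 1) < (1 - p) ^ (d - 1) :=
      pow_lt_pow_left₀ (by linarith) h1 hd1
    have h3 : Real.sqrt (1 - 4 * q) ≤ Real.sqrt (1 - 4 * p) :=
      Real.sqrt_le_sqrt (by linarith)
    have h4 : (0 : ℝ) ≤ Real.sqrt (1 - 4 * q) := Real.sqrt_nonneg _
    have h5 : (0 : ℝ) ≤ (1 - q) ^ (d - 1) := by positivity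
    nlinarith [Real.sqrt_nonneg (1 - 4 * p),
      pow_pos (show (0 : ℝ) < 1 - p by linarith) (d - 1)]
  -- existence
  have hmem : (0 : ℝ) ∈ Set.Ioo (f (1 / 4)) (f 0) := ⟨hfb, by rw [hfa]; norm_num⟩
  obtain ⟨p, hpmem, hpval⟩ := intermediate_value_Ioo' (by norm_num : (0 : ℝ) ≤ 1 / 4)
    hcont.continuousOn hmem
  refine ⟨p, ⟨⟨hpmem.1, le_of_lt hpmem.2⟩, by
    have := hpval; simp only [hf] at this; linarith⟩, ?_⟩
  rintro q ⟨⟨hq0, hq4⟩, heq⟩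
  have heqp : 1 / 2 * (1 - p) ^ (d - 1) * (1 + Real.sqrt (1 - 4 * p)) = p := by
    have := hpval; simp only [hf] at this; linarith
  rcases lt_trichotomy q p with h | h | h
  · have := key q p hq0 h (le_of_lt hpmem.2)
    rw [heq, heqp] at this; linarith
  · exact h
  · have := key p q hpmem.1 h hq4
    rw [heq, heqp] at this; linarith
end

section
/- For each integer d ≥ 4, let p_⋆(d) denote the unique solution p ∈ (0, 1/4] of the equation (1/2)·(1 − p)^{d−1}·(1 + √(1 − 4p)) = p. Then p_⋆(d) is asymptotic to (ln d)/d as d → ∞; that is, lim_{d→∞} d·p_⋆(d)/ln d = 1. -/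
open Filter

set_option maxHeartbeats 1000000

/-- Let `p⋆ d` be the unique solution `p ∈ (0, 1/4]` of
`(1/2)(1 - p)^{d-1}(1 + √(1 - 4p)) = p` for each `d ≥ 4`. Then
`p⋆ d ∼ (ln d)/d` as `d → ∞`, i.e. `d * p⋆ d / ln d → 1`. -/
theorem pstar_asymptotics (pstar : ℕ → ℝ)
    (hp : ∀ d : ℕ, 4 ≤ d → pstar d ∈ Set.Ioc (0 : ℝ) (1 / 4) ∧
      1 / 2 * (1 - pstar d) ^ (d - 1) * (1 + Real.sqrt (1 - 4 * pstar d)) = pstar d) :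
    Tendsto (fun d : ℕ => (d : ℝ) * pstar d / Real.log d) atTop (nhds 1) := by
  rw [Metric.tendsto_nhds]
  intro ε hε
  set ε' : ℝ := min ε (1/2) with hε'def
  have hε'0 : 0 < ε' := lt_min hε (by norm_num)
  have hε'le : ε' ≤ ε := min_le_left _ _
  have hε'half : ε' ≤ 1/2 := min_le_right _ _
  -- basic limits
  have hcast : Tendsto (fun d : ℕ => (d : ℝ)) atTop atTop := tendsto_natCast_atTop_atTop
  have hlog : Tendsto (fun d : ℕ => Real.log d) atTop atTop :=
    Real.tendsto_log_atTop.comp hcast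
  have hlogdiv : Tendsto (fun d : ℕ => Real.log d / d) atTop (nhds 0) :=
    (Real.isLittleO_log_id_atTop.tendsto_div_nhds_zero).comp hcast
  have e1 : ∀ᶠ d : ℕ in atTop, 4 ≤ d := eventually_ge_atTop 4
  have e4 : ∀ᶠ d : ℕ in atTop, Real.log d / d < ε'/4 :=
    hlogdiv.eventually_lt_const (by linarith only [hε'0])
  have e5 : ∀ᶠ d : ℕ in atTop, 32/ε'^2 ≤ Real.log d := hlog.eventually_ge_atTop _
  filter_upwards [e1, e4, e5] with d h4 hC4 hC5
  obtain ⟨⟨hp0, hp14⟩, heq⟩ := hp d h4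
  set p : ℝ := pstar d with hpdef
  set L : ℝ := Real.log d with hLdef
  have hd0 : (0:ℝ) < d := by
    have : 0 < d := by omega
    exact_mod_cast this
  -- L is large
  have hB : 32 ≤ ε'^2 * L := by
    have h := (div_le_iff₀ (by positivity : (0:ℝ) < ε'^2)).1 hC5
    linarith only [h]
  have hL0 : (0:ℝ) < L := by
    by_contra h
    push_neg at h
    have : ε'^2 * L ≤ 0 := mul_nonpos_of_nonneg_of_nonpos (sq_nonneg ε') h
    linarith only [this, hB]
  have hεL0 : 0 < ε' * L := mul_pos hε'0 hL0
  have hC : 64 ≤ ε' * L := by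
    have hm : 0 ≤ (1/2 - ε') * (ε' * L) :=
      mul_nonneg (by linarith only [hε'half]) hεL0.le
    nlinarith only [hm, hB]
  have hL1 : (1:ℝ) ≤ L := by
    have hm2 : 0 ≤ (1/2 - ε') * L := mul_nonneg (by linarith only [hε'half]) hL0.le
    nlinarith only [hm2, hC]
  have hexpL : Real.exp L = d := Real.exp_log hd0
  have hexpnegL : Real.exp (-L) = 1/(d:ℝ) := by
    rw [Real.exp_neg, hexpL, one_div]
  have hdn : ((d-1:ℕ):ℝ) = (d:ℝ) - 1 := by
    have h1 : 1 ≤ d := by omega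
    push_cast [Nat.cast_sub h1]
    ring
  -- bounds on the square root
  have hs0 : 0 ≤ Real.sqrt (1 - 4*p) := Real.sqrt_nonneg _
  have hs1 : Real.sqrt (1 - 4*p) ≤ 1 := Real.sqrt_le_one.2 (by linarith only [hp0])
  have h1p : 0 ≤ 1 - p := by linarith only [hp14]
  have hpow0 : 0 ≤ (1-p)^(d-1) := pow_nonneg h1p _
  -- the two key consequences of the fixed point equation
  have K1 : p ≤ (1-p)^(d-1) := by
    have hm := mul_nonneg hpow0 (by linarith only [hs1] :
      0 ≤ 1 - Real.sqrt (1 - 4*p))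
    nlinarith only [heq, hm]
  have K2 : 1/2 * (1-p)^(d-1) ≤ p := by
    have hm := mul_nonneg hpow0 hs0
    nlinarith only [heq, hm]
  -- Upper bound: p < (1+ε')·L/d
  have hupper : p < (1+ε')*L/d := by
    by_contra hcon
    push_neg at hcon
    have hdp : (1+ε')*L ≤ p * d := (div_le_iff₀ hd0).1 hcon
    have h1 : (1-p)^(d-1) ≤ Real.exp (-p) ^ (d-1) :=
      pow_le_pow_left₀ h1p (by linarith only [Real.add_one_le_exp (-p)]) _
    have h2 : Real.exp (-p) ^ (d-1) = Real.exp (((d-1:ℕ):ℝ) * (-p)) :=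
      (Real.exp_nat_mul _ _).symm
    have h3 : Real.exp (((d-1:ℕ):ℝ) * (-p)) ≤ Real.exp (-L + -(ε'/2)*L) := by
      apply Real.exp_le_exp.2
      rw [hdn]
      nlinarith only [hdp, hC, hp14]
    have h3' : Real.exp (-L + -(ε'/2)*L) = 1/(d:ℝ) * Real.exp (-(ε'/2)*L) := by
      rw [Real.exp_add, hexpnegL]
    have h4e : Real.exp (-(ε'/2)*L) < 1 := by
      rw [← Real.exp_zero]
      apply Real.exp_lt_exp.2
      linarith only [hεL0]
    have h5 : Real.exp (-(ε'/2)*L) < (1+ε')*L := by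
      have hge1 : 1 ≤ (1+ε')*L := by nlinarith only [hL1, hεL0]
      linarith only [h4e, hge1]
    have h6 : 1/(d:ℝ) * Real.exp (-(ε'/2)*L) < 1/(d:ℝ) * ((1+ε')*L) :=
      mul_lt_mul_of_pos_left h5 (one_div_pos.2 hd0)
    have hple : p ≤ 1/(d:ℝ) * Real.exp (-(ε'/2)*L) := by
      calc p ≤ (1-p)^(d-1) := K1
        _ ≤ Real.exp (-p) ^ (d-1) := h1
        _ = Real.exp (((d-1:ℕ):ℝ) * (-p)) := h2
        _ ≤ Real.exp (-L + -(ε'/2)*L) := h3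
        _ = 1/(d:ℝ) * Real.exp (-(ε'/2)*L) := h3'
    have hfin : p < (1+ε')*L/d := by
      have h7 : p < 1/(d:ℝ) * ((1+ε')*L) := lt_of_le_of_lt hple h6
      have heq' : 1/(d:ℝ) * ((1+ε')*L) = (1+ε')*L/d := by ring
      linarith only [h7, heq' ▸ h7]
    linarith only [hfin, hcon]
  -- Lower bound: (1-ε')·L/d < p
  have hlower : (1-ε')*L/d < p := by
    by_contra hcon
    push_neg at hcon
    have hdp : p * d ≤ (1-ε')*L := (le_div_iff₀ hd0).1 hcon
    have hdpL : p * d ≤ L := by linarith only [hdp, hεL0]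
    have hpLd : p ≤ L/d := by
      rw [le_div_iff₀ hd0]
      exact hdpL
    have hx0 : (0:ℝ) ≤ p + 2*p^2 := by nlinarith only [hp0]
    have hexp_x : Real.exp (-(p + 2*p^2)) ≤ 1 - p := by
      have hm : 0 ≤ (1-p) * (Real.exp (p + 2*p^2) - ((p + 2*p^2) + 1)) :=
        mul_nonneg h1p (sub_nonneg.2 (Real.add_one_le_exp _))
      have hsq : 0 ≤ p^2 * (1 - 2*p) :=
        mul_nonneg (sq_nonneg p) (by linarith only [hp14])
      have h1 : 1 ≤ (1-p) * Real.exp (p + 2*p^2) := by nlinarith only [hm, hsq, hp0, hp14]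
      have h2 : Real.exp (-(p + 2*p^2)) * Real.exp (p + 2*p^2) = 1 := by
        rw [← Real.exp_add, neg_add_cancel, Real.exp_zero]
      nlinarith only [h1, h2, Real.exp_pos (p + 2*p^2), Real.exp_pos (-(p + 2*p^2))]
    have h1 : Real.exp (-(p + 2*p^2)) ^ (d-1) ≤ (1-p)^(d-1) :=
      pow_le_pow_left₀ (Real.exp_pos _).le hexp_x _
    have h2 : Real.exp (-(p + 2*p^2)) ^ (d-1) = Real.exp (((d-1:ℕ):ℝ) * (-(p + 2*p^2))) :=
      (Real.exp_nat_mul _ _).symm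
    -- exponent bound
    have hq : (p*d)*p ≤ L*(L/d) := mul_le_mul hdpL hpLd hp0.le hL0.le
    have hq2 : L*(L/d) ≤ L*(ε'/4) := mul_le_mul_of_nonneg_left hC4.le hL0.le
    have hdx : (d:ℝ) * (p + 2*p^2) ≤ (1-ε'/2)*L := by nlinarith only [hq, hq2, hdp]
    have h3 : Real.exp (-L + (ε'/2)*L) ≤ Real.exp (((d-1:ℕ):ℝ) * (-(p + 2*p^2))) := by
      apply Real.exp_le_exp.2
      rw [hdn]
      nlinarith only [hdx, hx0]
    have h3' : Real.exp (-L + (ε'/2)*L) = 1/(d:ℝ) * Real.exp ((ε'/2)*L) := by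
      rw [Real.exp_add, hexpnegL]
    -- exp((ε'/2)L) is large
    have ht0 : (0:ℝ) ≤ (ε'/2)*L := by linarith only [hεL0]
    have he1 : Real.exp (((ε'/2)*L)/2) ^ 2 = Real.exp ((ε'/2)*L) := by
      rw [sq, ← Real.exp_add, add_halves]
    have he2 : (1 + ((ε'/2)*L)/2)^2 ≤ Real.exp (((ε'/2)*L)/2)^2 :=
      pow_le_pow_left₀ (by linarith only [ht0])
        (by linarith only [Real.add_one_le_exp (((ε'/2)*L)/2)]) 2
    have hexpt : 2*L ≤ Real.exp ((ε'/2)*L) := by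
      have hA : (1 + ((ε'/2)*L)/2)^2 ≤ Real.exp ((ε'/2)*L) := he1 ▸ he2
      have hm : 0 ≤ (ε'^2 * L - 32) * L := mul_nonneg (by linarith only [hB]) hL0.le
      nlinarith only [hA, hm, ht0]
    -- combine
    have hchain : 1/(d:ℝ) * Real.exp ((ε'/2)*L) ≤ (1-p)^(d-1) := by
      calc 1/(d:ℝ) * Real.exp ((ε'/2)*L) = Real.exp (-L + (ε'/2)*L) := h3'.symm
        _ ≤ Real.exp (((d-1:ℕ):ℝ) * (-(p + 2*p^2))) := h3
        _ = Real.exp (-(p + 2*p^2)) ^ (d-1) := h2.symm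
        _ ≤ (1-p)^(d-1) := h1
    have h7 : 1/(d:ℝ) * Real.exp ((ε'/2)*L) ≤ 2*p := by linarith only [hchain, K2]
    have h8 : 1/(d:ℝ) * (2*L) ≤ 1/(d:ℝ) * Real.exp ((ε'/2)*L) :=
      mul_le_mul_of_nonneg_left hexpt (by positivity)
    have hge : L/d ≤ p := by
      have hrw : 1/(d:ℝ) * (2*L) = 2*(L/d) := by ring
      linarith only [h7, h8, hrw ▸ h8]
    have h9 : 0 < ε'*L/d := div_pos hεL0 hd0
    have h10 : (1-ε')*L/d = L/d - ε'*L/d := by ring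
    linarith only [hge, hcon, h9, h10]
  -- conclude
  have hu : p * d < (1+ε')*L := (lt_div_iff₀ hd0).1 hupper
  have hl : (1-ε')*L < p * d := (div_lt_iff₀ hd0).1 hlower
  rw [Real.dist_eq, abs_sub_lt_iff]
  constructor
  · have hlt : (d:ℝ) * p / L < 1 + ε' := by
      rw [div_lt_iff₀ hL0]
      linarith only [hu]
    linarith only [hlt, hε'le]
  · have hgt : 1 - ε' < (d:ℝ) * p / L := by
      rw [lt_div_iff₀ hL0]
      linarith only [hl]
    linarith only [hgt, hε'le]
end

section
/- Let d ≥ 2 be an integer and let p_d denote the unique solution p ∈ (0, 1/4] of the equation ((1 + √(1 − 4p))/2)^d = p. Suppose X = (X_v)_{v∈V} is a 1-dependent proper q-coloring of the d-ray star graph S^d such that all the random variables X_v have the same distribution. Then q ≥ 1/p_d. -/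
open MeasureTheory ProbabilityTheory

/-- A process `X` indexed by the vertices of a graph `G` is *1-dependent* if its
restrictions to any two vertex sets at graph distance greater than 1 (i.e. containing
no common and no adjacent vertices) are independent. -/
def OneDependent {V E Ω : Type*} [MeasurableSpace E] (G : SimpleGraph V)
    [MeasurableSpace Ω] (μ : Measure Ω) (X : V → Ω → E) : Prop :=
  ∀ A B : Set V, (∀ a ∈ A, ∀ b ∈ B, a ≠ b ∧ ¬G.Adj a b) →
    IndepFun (fun ω (a : A) => X a.1 ω) (fun ω (b : B) => X b.1 ω) μ

/-- A `{0,1}`-valued process is a *hard-core process* on `G` if almost surely no two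
adjacent vertices both take the value `1` (`true`). -/
def HardCore {V Ω : Type*} (G : SimpleGraph V) [MeasurableSpace Ω]
    (μ : Measure Ω) (J : V → Ω → Bool) : Prop :=
  ∀ u v, G.Adj u v → μ {ω | J u ω = true ∧ J v ω = true} = 0

/-- The critical point `p_h(G)`: the supremum of all `p` for which a 1-dependent
hard-core process on `G` with marginals `P(J_v = 1) = p` exists. -/
noncomputable def pCrit {V : Type*} (G : SimpleGraph V) : ℝ :=
  sSup {p : ℝ | ∃ (Ω : Type) (_ : MeasurableSpace Ω) (μ : Measure Ω),
    IsProbabilityMeasure μ ∧ ∃ J : V → Ω → Bool,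
      (∀ v, Measurable (J v)) ∧ HardCore G μ J ∧ OneDependent G μ J ∧
      ∀ v, (μ {ω | J v ω = true}).toReal = p}

/-- The `d`-ray star graph: a distinguished vertex `none`, and `d` infinite rays;
`some (i, k)` is the `(k+1)`-st vertex of ray `i`. -/
def starGraph (d : ℕ) : SimpleGraph (Option (Fin d × ℕ)) :=
  SimpleGraph.fromRel (fun u v =>
    (∃ i, u = none ∧ v = some (i, 0)) ∨ (∃ i k, u = some (i, k) ∧ v = some (i, k + 1)))

/-!
Fix a colour `c` with `P(X_v = c) = p' ≥ 1/q`. The indicators of `{X_v = c}` form a 1-dependent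
hard-core process on `S^d`, so it suffices to show `p' ≤ p_d`. Along a ray, 1-dependence and the
hard-core constraint force the probability `b_m` that `m` consecutive vertices are vacant to obey
`b_{m+2} = b_{m+1} - p' b_m`, and distinct rays are independent. An occupied centre makes the first
vertex of every ray vacant and is independent of the rest of the rays, so `p' b_m^d ≤ b_{m+1}^d`,
i.e. `b_{m+1}/b_m ≥ t := p'^{1/d}` for all `m`. The ratios follow `s ↦ 1 - p'/s`, which drifts
below `t` unless `t ≤ 1/2` or `t^d = p' ≤ t(1 - t)`; either way `t ≤ (1 + √(1 - 4p_d))/2`,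
whose `d`-th power is `p_d`.
-/

open Finset

section OneDependent

variable {V E Ω : Type*} [MeasurableSpace E] [MeasurableSpace Ω]
  {G : SimpleGraph V} {μ : Measure Ω} {X : V → Ω → E}

theorem OneDependent.comp {F : Type*} [MeasurableSpace F] (hX : OneDependent G μ X)
    {f : E → F} (hf : Measurable f) : OneDependent G μ (fun v ω => f (X v ω)) := fun A B hAB =>
  (hX A B hAB).comp (φ := fun x a => f (x a)) (ψ := fun x b => f (x b)) (by fun_prop)
    (by fun_prop)

theorem OneDependent.comap {W : Type*} {H : SimpleGraph W} (hX : OneDependent G μ X)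
    (f : H ↪g G) : OneDependent H μ (fun w => X (f w)) := by
  intro A B hAB
  have hsep : ∀ a ∈ f '' A, ∀ b ∈ f '' B, a ≠ b ∧ ¬G.Adj a b := by
    rintro _ ⟨a, ha, rfl⟩ _ ⟨b, hb, rfl⟩
    simpa [f.injective.ne_iff] using hAB a ha b hb
  exact (hX _ _ hsep).comp (φ := fun x (a : A) => x ⟨f a, Set.mem_image_of_mem f a.2⟩)
    (ψ := fun x (b : B) => x ⟨f b, Set.mem_image_of_mem f b.2⟩)
    (by fun_prop) (by fun_prop)

theorem OneDependent.measureReal_biInter_inter (hX : OneDependent G μ X) {S T : Finset V}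
    (hST : ∀ a ∈ S, ∀ b ∈ T, a ≠ b ∧ ¬G.Adj a b) {g h : V → Set E}
    (hg : ∀ v, MeasurableSet (g v)) (hh : ∀ v, MeasurableSet (h v)) :
    μ.real ((⋂ v ∈ S, X v ⁻¹' g v) ∩ ⋂ v ∈ T, X v ⁻¹' h v) =
      μ.real (⋂ v ∈ S, X v ⁻¹' g v) * μ.real (⋂ v ∈ T, X v ⁻¹' h v) := by
  have cylinder : ∀ (U : Finset V) (k : V → Set E), (⋂ v ∈ U, X v ⁻¹' k v) =
      (fun ω (a : (U : Set V)) => X a ω) ⁻¹'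
        ⋂ a : (U : Set V), (fun x : ↥(U : Set V) → E => x a) ⁻¹' k a := by
    intro U k
    ext
    simp
  have hmeas : ∀ (U : Finset V) (k : V → Set E), (∀ v, MeasurableSet (k v)) →
      MeasurableSet (⋂ a : (U : Set V), (fun x : ↥(U : Set V) → E => x a) ⁻¹' k a) :=
    fun U k hk => .iInter fun a => measurable_pi_apply a (hk a)
  simp only [measureReal_def, ← ENNReal.toReal_mul, cylinder]
  rw [(hX S T hST).measure_inter_preimage_eq_mul _ _ (hmeas S g hg) (hmeas T h hh)]

theorem OneDependent.measureReal_biInter_biUnion [IsProbabilityMeasure μ] [DecidableEq V]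
    (hX : OneDependent G μ X) {ι : Type*} {s : Finset ι} {S : ι → Finset V}
    (hS : (s : Set ι).Pairwise fun i j => ∀ a ∈ S i, ∀ b ∈ S j, a ≠ b ∧ ¬G.Adj a b)
    {g : V → Set E} (hg : ∀ v, MeasurableSet (g v)) :
    μ.real (⋂ v ∈ s.biUnion S, X v ⁻¹' g v) =
      ∏ i ∈ s, μ.real (⋂ v ∈ S i, X v ⁻¹' g v) := by
  classical
  induction s using Finset.induction_on with
  | empty => simp
  | insert i s hi ih =>
    rw [biUnion_insert, set_biInter_inter, prod_insert hi, ← ih (hS.mono (by simp)),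
      hX.measureReal_biInter_inter _ hg hg]
    intro a ha b hb
    obtain ⟨j, hj, hb⟩ := mem_biUnion.1 hb
    exact hS (by simp) (by simp [hj]) (by rintro rfl; exact hi hj) a ha b hb

end OneDependent

theorem HardCore.comap {V W Ω : Type*} [MeasurableSpace Ω] {G : SimpleGraph V}
    {H : SimpleGraph W} {μ : Measure Ω} {J : V → Ω → Bool} (hJ : HardCore G μ J)
    (f : H ↪g G) :
    HardCore H μ (fun w => J (f w)) :=
  fun _ _ huv => hJ _ _ (f.map_adj_iff.2 huv)

theorem exists_inv_card_le_measureReal_singleton {α : Type*} [Fintype α] [MeasurableSpace α]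
    [MeasurableSingletonClass α] (ν : Measure α) [IsProbabilityMeasure ν] :
    ∃ a, (Fintype.card α : ℝ)⁻¹ ≤ ν.real {a} := by
  have := nonempty_of_isProbabilityMeasure ν
  obtain ⟨a, -, ha⟩ := exists_le_of_sum_le (s := univ) univ_nonempty
    (f := fun _ => (Fintype.card α : ℝ)⁻¹) (g := fun a => ν.real {a}) (by
      rw [sum_measureReal_singleton, coe_univ, probReal_univ, sum_const, card_univ, nsmul_eq_mul,
        mul_inv_cancel₀ (by positivity)])
  exact ⟨a, ha⟩

def pathVacancyProb (p : ℝ) : ℕ → ℝ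
  | 0 => 1
  | 1 => 1 - p
  | m + 2 => pathVacancyProb p (m + 1) - p * pathVacancyProb p m

section Path

variable {Ω : Type*} [MeasurableSpace Ω] {μ : Measure Ω} [IsProbabilityMeasure μ]
  {J : ℕ → Ω → Bool} {p : ℝ}

theorem HardCore.measureReal_vacant_range (hJ : ∀ n, Measurable (J n))
    (hhc : HardCore (SimpleGraph.hasse ℕ) μ J) (hdep : OneDependent (SimpleGraph.hasse ℕ) μ J)
    (hp : ∀ n, μ.real (J n ⁻¹' {true}) = p) (m : ℕ) :
    μ.real (⋂ n ∈ range m, J n ⁻¹' {false}) = pathVacancyProb p m := by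
  set Z : ℕ → Set Ω := fun m => ⋂ n ∈ range m, J n ⁻¹' {false}
  have Z_succ (m : ℕ) : Z (m + 1) = J m ⁻¹' {false} ∩ Z m := by
    simp only [Z, range_add_one, set_biInter_insert]
  have indep (m : ℕ) : μ.real (Z m ∩ J (m + 1) ⁻¹' {true}) = μ.real (Z m) * p := by
    have hsep : ∀ a ∈ range m, ∀ b ∈ ({m + 1} : Finset ℕ),
        a ≠ b ∧ ¬(SimpleGraph.hasse ℕ).Adj a b := by
      simp only [mem_range, mem_singleton, SimpleGraph.hasse_adj, Nat.covBy_iff_add_one_eq]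
      omega
    have := hdep.measureReal_biInter_inter hsep (g := fun _ => {false}) (h := fun _ => {true})
      (fun _ => .of_discrete) (fun _ => .of_discrete)
    rwa [set_biInter_singleton, hp] at this
  -- an occupied vertex `m + 1` forces its neighbour `m` to be vacant
  have occupied_succ (m : ℕ) :
      μ.real (Z (m + 1) ∩ J (m + 1) ⁻¹' {true}) =
        μ.real (Z m ∩ J (m + 1) ⁻¹' {true}) := by
    have hnull : μ.real (Z m ∩ J (m + 1) ⁻¹' {true} ∩ J m ⁻¹' {true}) = 0 :=
      measureReal_mono_null (s₂ := {ω | J m ω = true ∧ J (m + 1) ω = true})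
        (fun ω ⟨⟨_, h₁⟩, h₂⟩ => ⟨h₂, h₁⟩)
        (by rw [measureReal_def, hhc m (m + 1) (by simp [SimpleGraph.hasse_adj]),
          ENNReal.toReal_zero])
    rw [← measureReal_sdiff_null' hnull, Z_succ]
    congr 1
    ext ω
    simp only [Set.mem_inter_iff, Set.mem_sdiff, Set.mem_preimage, Set.mem_singleton_iff,
      Bool.not_eq_true]
    tauto
  have recurrence (m : ℕ) : μ.real (Z (m + 2)) = μ.real (Z (m + 1)) - p * μ.real (Z m) := by
    have hsplit := measureReal_inter_add_sdiff (μ := μ) (s := Z (m + 1))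
      (hJ (m + 1) (measurableSet_singleton true))
    have hvacant : Z (m + 1) \ J (m + 1) ⁻¹' {true} = Z (m + 2) := by
      rw [Z_succ (m + 1)]
      ext ω
      simp only [Set.mem_inter_iff, Set.mem_sdiff, Set.mem_preimage, Set.mem_singleton_iff,
        Bool.not_eq_true]
      tauto
    rw [hvacant, occupied_succ, indep] at hsplit
    linarith
  show μ.real (Z m) = _
  induction m using Nat.twoStepInduction with
  | zero => simp [Z, pathVacancyProb]
  | one =>
    have hZ₁ : Z 1 = (J 0 ⁻¹' {true})ᶜ := by ext ω; simp [Z]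
    rw [hZ₁, probReal_compl_eq_one_sub (hJ 0 (measurableSet_singleton true)), hp]
    rfl
  | more m h₀ h₁ => rw [recurrence, h₀, h₁]; rfl

end Path

section Star

variable {d : ℕ}

@[simp]
theorem starGraph_adj_none_some {i : Fin d} {k : ℕ} :
    (starGraph d).Adj none (some (i, k)) ↔ k = 0 := by
  simp [starGraph, eq_comm]

@[simp]
theorem starGraph_adj_some_some {i j : Fin d} {a b : ℕ} :
    (starGraph d).Adj (some (i, a)) (some (j, b)) ↔ i = j ∧ (a + 1 = b ∨ b + 1 = a) := by
  rw [starGraph, SimpleGraph.fromRel_adj]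
  grind

def starGraph.ray (i : Fin d) (k : ℕ) : SimpleGraph.hasse ℕ ↪g starGraph d where
  toFun n := some (i, k + n)
  inj' _ _ h := by simpa using h
  map_rel_iff' {a b} := by
    change (starGraph d).Adj (some (i, k + a)) (some (i, k + b)) ↔ _
    simp only [starGraph_adj_some_some, true_and, SimpleGraph.hasse_adj, Nat.covBy_iff_add_one_eq]
    omega

@[simp]
theorem starGraph.ray_apply (i : Fin d) (k n : ℕ) : starGraph.ray i k n = some (i, k + n) :=
  rfl

def starGraph.rayBlock (d k m : ℕ) : Finset (Option (Fin d × ℕ)) :=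
  univ.biUnion fun i => (range m).image (starGraph.ray i k)

theorem starGraph.biInter_rayBlock {α : Type*} (k m : ℕ) (f : Option (Fin d × ℕ) → Set α) :
    ⋂ v ∈ starGraph.rayBlock d k m, f v = ⋂ i, ⋂ n ∈ range m, f (some (i, k + n)) := by
  simp only [starGraph.rayBlock, set_biInter_biUnion, set_biInter_finset_image, mem_univ,
    Set.iInter_true, starGraph.ray_apply]

end Star

section HardCoreStar

variable {d : ℕ} {Ω : Type*} [MeasurableSpace Ω] {μ : Measure Ω} [IsProbabilityMeasure μ]
  {J : Option (Fin d × ℕ) → Ω → Bool} {p : ℝ}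

theorem HardCore.measureReal_vacant_ray (hJ : ∀ v, Measurable (J v))
    (hhc : HardCore (starGraph d) μ J) (hdep : OneDependent (starGraph d) μ J)
    (hp : ∀ v, μ.real (J v ⁻¹' {true}) = p) (i : Fin d) (k m : ℕ) :
    μ.real (⋂ n ∈ range m, J (starGraph.ray i k n) ⁻¹' {false}) = pathVacancyProb p m :=
  (hhc.comap _).measureReal_vacant_range (fun _ => hJ _) (hdep.comap _) (fun _ => hp _) m

theorem HardCore.measureReal_vacant_rayBlock (hJ : ∀ v, Measurable (J v))
    (hhc : HardCore (starGraph d) μ J) (hdep : OneDependent (starGraph d) μ J)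
    (hp : ∀ v, μ.real (J v ⁻¹' {true}) = p) (k m : ℕ) :
    μ.real (⋂ v ∈ starGraph.rayBlock d k m, J v ⁻¹' {false}) = pathVacancyProb p m ^ d := by
  rw [starGraph.rayBlock, hdep.measureReal_biInter_biUnion ?_ fun _ => .of_discrete]
  · simp only [set_biInter_finset_image, hhc.measureReal_vacant_ray hJ hdep hp]
    simp
  · intro i _ j _ hij a ha b hb
    obtain ⟨n, -, rfl⟩ := mem_image.1 ha
    obtain ⟨n', -, rfl⟩ := mem_image.1 hb
    simp [hij]

theorem HardCore.mul_measureReal_vacant_rayBlock_le (hhc : HardCore (starGraph d) μ J)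
    (hdep : OneDependent (starGraph d) μ J) (hp : ∀ v, μ.real (J v ⁻¹' {true}) = p)
    (m : ℕ) :
    p * μ.real (⋂ v ∈ starGraph.rayBlock d 1 m, J v ⁻¹' {false}) ≤
      μ.real (⋂ v ∈ starGraph.rayBlock d 0 (m + 1), J v ⁻¹' {false}) := by
  have hsep : ∀ a ∈ ({none} : Finset _), ∀ b ∈ starGraph.rayBlock d 1 m,
      a ≠ b ∧ ¬(starGraph d).Adj a b := by
    intro a ha b hb
    obtain ⟨i, -, hb⟩ := mem_biUnion.1 hb
    obtain ⟨n, -, rfl⟩ := mem_image.1 hb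
    rw [mem_singleton.1 ha]
    simp [add_comm]
  have indep := hdep.measureReal_biInter_inter hsep (g := fun _ => {true}) (h := fun _ => {false})
    (fun _ => .of_discrete) (fun _ => .of_discrete)
  rw [set_biInter_singleton, hp] at indep
  set N := ⋃ i : Fin d, {ω | J none ω = true ∧ J (some (i, 0)) ω = true}
  have hN : μ.real N = 0 := by
    rw [measureReal_def, measure_iUnion_null fun i => hhc _ _ (by simp), ENNReal.toReal_zero]
  calc p * μ.real (⋂ v ∈ starGraph.rayBlock d 1 m, J v ⁻¹' {false})
      ≤ μ.real ((⋂ v ∈ starGraph.rayBlock d 0 (m + 1), J v ⁻¹' {false}) ∪ N) := by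
        rw [← indep]
        refine measureReal_mono ?_
        rintro ω ⟨hroot, hvacant⟩
        by_cases hω : ω ∈ N
        · exact Or.inr hω
        left
        simp only [N, Set.mem_iUnion, Set.mem_ofPred_eq, not_exists, not_and] at hω
        simp only [starGraph.biInter_rayBlock, Set.mem_iInter, mem_range, Set.mem_preimage,
          Set.mem_singleton_iff] at hvacant ⊢
        intro i n hn
        cases n with
        | zero => simpa using hω i hroot
        | succ n => simpa [add_comm] using hvacant i n (by omega)
    _ ≤ _ := by simpa [hN] using measureReal_union_le (μ := μ) _ N

end HardCoreStar

-- If neither holds, each step of `s ↦ 1 - p / s` lowers the ratio `b (m + 1) / b m` by at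
-- least `p - t (1 - t) > 0`, so it cannot stay above `t`.
theorem le_half_or_le_mul_one_sub_of_mul_le_pathVacancyProb {p t : ℝ} (hp : 0 ≤ p)
    (h : ∀ m, t * pathVacancyProb p m ≤ pathVacancyProb p (m + 1)) :
    t ≤ 1 / 2 ∨ p ≤ t * (1 - t) := by
  by_contra! ⟨ht, hpt⟩
  set b := pathVacancyProb p
  have hb_pos (m : ℕ) : 0 < b m := by
    induction m with
    | zero => simp [b, pathVacancyProb]
    | succ m ih => exact lt_of_lt_of_le (by nlinarith) (h m)
  have hb_anti (m : ℕ) : b (m + 1) ≤ b m := by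
    cases m with
    | zero => simp [b, pathVacancyProb, hp]
    | succ m =>
      simp only [b, pathVacancyProb]
      nlinarith [hb_pos m]
  set s : ℕ → ℝ := fun m => b (m + 1) / b m
  have hs_ge (m : ℕ) : t ≤ s m := (le_div_iff₀ (hb_pos m)).2 (h m)
  have hs_le (m : ℕ) : s m ≤ 1 := (div_le_one (hb_pos m)).2 (hb_anti m)
  have hs_succ (m : ℕ) : s (m + 1) = 1 - p / s m := by
    have := (hb_pos m).ne'
    have := (hb_pos (m + 1)).ne'
    change (b (m + 1) - p * b m) / b (m + 1) = 1 - p / (b (m + 1) / b m)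
    field_simp
  set Q := p - t * (1 - t)
  have hs_step (m : ℕ) : s (m + 1) ≤ s m - Q := by
    have hsm := hs_ge m
    have hpos : 0 < s m := by linarith
    rw [hs_succ, sub_le_iff_le_add, ← sub_le_iff_le_add', le_div_iff₀ hpos]
    nlinarith [mul_nonneg (sub_nonneg.2 hsm) (by linarith : (0 : ℝ) ≤ s m + t - 1),
      mul_nonneg (by linarith : (0 : ℝ) ≤ Q) (sub_nonneg.2 (hs_le m))]
  have hs_lin (m : ℕ) : s m ≤ s 0 - m * Q := by
    induction m with
    | zero => simp
    | succ m ih => push_cast; linarith [hs_step m]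
  obtain ⟨m, hm⟩ := exists_nat_gt ((s 0 - t) / Q)
  rw [div_lt_iff₀ (by linarith)] at hm
  linarith [hs_lin m, hs_ge m]

theorem pow_le_of_le_half_or_pow_le_mul_one_sub {d : ℕ} (hd : d ≠ 0) {p t : ℝ}
    (hp : p ≤ 1 / 4) (heq : ((1 + √(1 - 4 * p)) / 2) ^ d = p) (ht : 0 ≤ t)
    (h : t ≤ 1 / 2 ∨ t ^ d ≤ t * (1 - t)) :
    t ^ d ≤ p := by
  set x := (1 + √(1 - 4 * p)) / 2
  have hx : 1 / 2 ≤ x := by simp only [x]; linarith [Real.sqrt_nonneg (1 - 4 * p)]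
  have hx_root : x * (1 - x) = p := by
    linear_combination (-1 / 4 : ℝ) * Real.sq_sqrt (by linarith : (0 : ℝ) ≤ 1 - 4 * p)
  have hx_pow : x ^ (d - 1) = 1 - x := by
    refine mul_left_cancel₀ (by positivity : x ≠ 0) ?_
    rw [← pow_succ', Nat.sub_add_cancel (Nat.pos_of_ne_zero hd), heq, hx_root]
  suffices t ≤ x by rw [← heq]; exact pow_le_pow_left₀ ht this d
  rcases h with h | h
  · linarith
  by_contra! hxt
  have ht_pow : t ^ (d - 1) ≤ 1 - t := by
    refine le_of_mul_le_mul_left ?_ (by linarith : 0 < t)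
    rwa [← pow_succ', Nat.sub_add_cancel (Nat.pos_of_ne_zero hd)]
  linarith [pow_le_pow_left₀ (by linarith) hxt.le (d - 1)]

theorem HardCore.marginal_le_of_starGraph {d : ℕ} {Ω : Type*} [MeasurableSpace Ω]
    {μ : Measure Ω} [IsProbabilityMeasure μ] {J : Option (Fin d × ℕ) → Ω → Bool}
    {p' p : ℝ}
    (hJ : ∀ v, Measurable (J v)) (hhc : HardCore (starGraph d) μ J)
    (hdep : OneDependent (starGraph d) μ J) (hp' : ∀ v, μ.real (J v ⁻¹' {true}) = p')
    (hp : p ≤ 1 / 4) (heq : ((1 + √(1 - 4 * p)) / 2) ^ d = p) : p' ≤ p := by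
  have hd : d ≠ 0 := by rintro rfl; norm_num at heq; linarith
  have hp'_nonneg : 0 ≤ p' := hp' none ▸ measureReal_nonneg
  have hb_nonneg (m : ℕ) : 0 ≤ pathVacancyProb p' m :=
    hhc.measureReal_vacant_ray hJ hdep hp' ⟨0, Nat.pos_of_ne_zero hd⟩ 0 m ▸ measureReal_nonneg
  set t := p' ^ (d⁻¹ : ℝ)
  have ht : t ^ d = p' := Real.rpow_inv_natCast_pow hp'_nonneg hd
  have ht_nonneg : 0 ≤ t := by positivity
  have hratio (m : ℕ) : t * pathVacancyProb p' m ≤ pathVacancyProb p' (m + 1) := by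
    have := hhc.mul_measureReal_vacant_rayBlock_le hdep hp' m
    rw [hhc.measureReal_vacant_rayBlock hJ hdep hp', hhc.measureReal_vacant_rayBlock hJ hdep hp']
      at this
    exact (pow_le_pow_iff_left₀ (mul_nonneg ht_nonneg (hb_nonneg m)) (hb_nonneg _) hd).1
      (by rwa [mul_pow, ht])
  rw [← ht]
  refine pow_le_of_le_half_or_pow_le_mul_one_sub hd hp heq ht_nonneg ?_
  rw [ht]
  exact le_half_or_le_mul_one_sub_of_mul_le_pathVacancyProb hp'_nonneg hratio

theorem coloring_lower_bound_general (d : ℕ) (p : ℝ)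
    (hp : p ∈ Set.Ioc (0 : ℝ) (1 / 4))
    (heq : ((1 + Real.sqrt (1 - 4 * p)) / 2) ^ d = p)
    (q : ℕ) (Ω : Type) [MeasurableSpace Ω] (μ : Measure Ω) [IsProbabilityMeasure μ]
    (X : Option (Fin d × ℕ) → Ω → Fin q) (hmeas : ∀ v, Measurable (X v))
    (hproper : ∀ u v, (starGraph d).Adj u v → μ {ω | X u ω = X v ω} = 0)
    (hdep : OneDependent (starGraph d) μ X)
    (hid : ∀ u v, Measure.map (X u) μ = Measure.map (X v) μ) :
    (q : ℝ) ≥ 1 / p := by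
  have : IsProbabilityMeasure (μ.map (X none)) :=
    Measure.isProbabilityMeasure_map (hmeas none).aemeasurable
  obtain ⟨c, hc⟩ := exists_inv_card_le_measureReal_singleton (μ.map (X none))
  have hf : Measurable fun x : Fin q => decide (x = c) := measurable_of_finite _
  set J : Option (Fin d × ℕ) → Ω → Bool := fun v ω => decide (X v ω = c)
  have hJ (v) : Measurable (J v) := hf.comp (hmeas v)
  have hhc : HardCore (starGraph d) μ J := fun u v huv =>
    measure_mono_null (fun ω ⟨hu, hv⟩ => by simp_all [J]) (hproper u v huv)
  have hmarg (v) : μ.real (J v ⁻¹' {true}) = (μ.map (X none)).real {c} := by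
    rw [hid none v, map_measureReal_apply (hmeas v) (measurableSet_singleton c)]
    congr 1
    ext ω
    simp [J]
  have hle := hhc.marginal_le_of_starGraph hJ (hdep.comp hf) hmarg hp.2 heq
  rw [Fintype.card_fin] at hc
  rw [ge_iff_le, one_div_le hp.1 (by exact_mod_cast c.pos)]
  simpa using hc.trans hle

/-- Let `d ≥ 2` and let `p` be the unique solution in `(0, 1/4]` of
`((1 + √(1 - 4p))/2)^d = p`. If `X` is a 1-dependent proper `q`-coloring of the
`d`-ray star graph whose one-dimensional marginals are all equal, then `q ≥ 1/p`. -/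
theorem coloring_lower_bound (d : ℕ) (hd : 2 ≤ d) (p : ℝ)
    (hp : p ∈ Set.Ioc (0 : ℝ) (1 / 4))
    (heq : ((1 + Real.sqrt (1 - 4 * p)) / 2) ^ d = p)
    (q : ℕ) (Ω : Type) [MeasurableSpace Ω] (μ : Measure Ω) [IsProbabilityMeasure μ]
    (X : Option (Fin d × ℕ) → Ω → Fin q) (hmeas : ∀ v, Measurable (X v))
    (hproper : ∀ u v, (starGraph d).Adj u v → μ {ω | X u ω = X v ω} = 0)
    (hdep : OneDependent (starGraph d) μ X)
    (hid : ∀ u v, Measure.map (X u) μ = Measure.map (X v) μ) :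
    (q : ℝ) ≥ 1 / p :=
  coloring_lower_bound_general d p hp heq q Ω μ X hmeas hproper hdep hid
end

section
/- Let J = (J_n)_{n≥1} be a 1-dependent hard-core process on the half-line path graph on vertices 1, 2, 3, ... (with n adjacent to n+1) with marginals p. Define b_0 := 1 and b_k := P(J_1 = 0, J_2 = 0, ..., J_k = 0) for k ≥ 1. Then b_1 = 1 − p and b_k = b_{k−1} − p·b_{k−2} for every k ≥ 2; in particular b_2 = 1 − 2p, b_3 = 1 − 3p + p^2, and b_4 = 1 − 4p + 3p^2. -/
open MeasureTheory ProbabilityTheory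

/-- The half-line path graph on the vertices `1, 2, 3, …`; vertex `n` of the half-line
is represented by `n - 1 : ℕ`, and consecutive vertices are adjacent. -/
def halfLine : SimpleGraph ℕ := SimpleGraph.fromRel (fun m n => n = m + 1)

/-- Let `J` be a 1-dependent hard-core process on the half-line path
graph `1, 2, 3, …` (here `J j` is the value at vertex `j + 1`) with marginals `p`, and
set `b 0 := 1` and `b k := P(J_1 = 0, …, J_k = 0)` for `k ≥ 1`. Then `b 1 = 1 - p` and
`b k = b (k-1) - p * b (k-2)` for all `k ≥ 2`; in particular `b 2 = 1 - 2p`,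
`b 3 = 1 - 3p + p^2` and `b 4 = 1 - 4p + 3p^2`. -/
theorem zero_run_recursion (p : ℝ)
    (Ω : Type) [MeasurableSpace Ω] (μ : Measure Ω) [IsProbabilityMeasure μ]
    (J : ℕ → Ω → Bool) (hmeas : ∀ v, Measurable (J v))
    (hhc : HardCore halfLine μ J) (hdep : OneDependent halfLine μ J)
    (hmarg : ∀ v, (μ {ω | J v ω = true}).toReal = p)
    (b : ℕ → ℝ) (hb0 : b 0 = 1)
    (hb : ∀ k, 1 ≤ k → b k = (μ {ω | ∀ j < k, J j ω = false}).toReal) :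
    b 1 = 1 - p ∧ (∀ k, 2 ≤ k → b k = b (k - 1) - p * b (k - 2)) ∧
    b 2 = 1 - 2 * p ∧ b 3 = 1 - 3 * p + p ^ 2 ∧ b 4 = 1 - 4 * p + 3 * p ^ 2 := by
  classical
  set S : ℕ → Set Ω := fun k => {ω | ∀ j < k, J j ω = false} with hSdef
  have hSmeas : ∀ k, MeasurableSet (S k) := by
    intro k
    have h : S k = ⋂ j ∈ Set.Iio k, (J j) ⁻¹' {false} := by
      ext ω; simp [hSdef]
    rw [h]
    exact MeasurableSet.biInter (Set.to_countable _)
      (fun j _ => (hmeas j) (measurableSet_singleton _))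
  have hT : ∀ v, MeasurableSet {ω | J v ω = true} := fun v =>
    (hmeas v) (measurableSet_singleton _)
  have hb' : ∀ k, b k = (μ (S k)).toReal := by
    intro k
    rcases Nat.eq_zero_or_pos k with hk | hk
    · subst hk
      have h : S 0 = Set.univ := by ext ω; simp [hSdef]
      simp [h, hb0]
    · exact hb k hk
  have key : ∀ m : ℕ,
      μ (S (m+1)) = μ (S (m+2)) + μ (S m) * μ {ω | J (m+1) ω = true} := by
    intro m
    set T : Set Ω := {ω | J (m+1) ω = true} with hTdef
    -- split S (m+1) according to the value at m+1
    have hsplit : S (m+1) = S (m+2) ∪ (S (m+1) ∩ T) := by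
      ext ω
      constructor
      · intro h
        by_cases hJ : J (m+1) ω = true
        · exact Or.inr ⟨h, hJ⟩
        · left
          intro j hj
          rcases Nat.lt_succ_iff_lt_or_eq.mp hj with h' | h'
          · exact h j h'
          · subst h'; simpa using hJ
      · rintro (h | ⟨h, -⟩)
        · exact fun j hj => h j (hj.trans (Nat.lt_succ_self _))
        · exact h
    have hdisj : Disjoint (S (m+2)) (S (m+1) ∩ T) := by
      rw [Set.disjoint_left]
      rintro ω h ⟨-, hJ⟩
      have h2 := h (m+1) (Nat.lt_succ_self _)
      have hJ' : J (m+1) ω = true := hJ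
      rw [h2] at hJ'
      exact Bool.false_ne_true hJ'
    have hA : μ (S (m+1)) = μ (S (m+2)) + μ (S (m+1) ∩ T) := by
      conv_lhs => rw [hsplit]
      rw [measure_union hdisj ((hSmeas (m+1)).inter (hT (m+1)))]
    -- using hard-core, drop the condition at vertex m
    have hnull : μ {ω | J m ω = true ∧ J (m+1) ω = true} = 0 := by
      apply hhc
      simp only [halfLine, SimpleGraph.fromRel_adj]
      exact ⟨by omega, Or.inl trivial⟩
    have hBsub : S (m+1) ∩ T ⊆ S m ∩ T :=
      Set.inter_subset_inter_left _
        (fun ω h j hj => h j (hj.trans (Nat.lt_succ_self m)))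
    have hdiffsub : (S m ∩ T) \ (S (m+1) ∩ T) ⊆
        {ω | J m ω = true ∧ J (m+1) ω = true} := by
      rintro ω ⟨⟨hSm, hTm⟩, hnot⟩
      refine ⟨?_, hTm⟩
      by_contra h
      apply hnot
      refine ⟨?_, hTm⟩
      intro j hj
      rcases Nat.lt_succ_iff_lt_or_eq.mp hj with h' | h'
      · exact hSm j h'
      · subst h'; simpa using h
    have hB : μ (S (m+1) ∩ T) = μ (S m ∩ T) := by
      refine le_antisymm (measure_mono hBsub) ?_
      calc μ (S m ∩ T)
          ≤ μ ((S (m+1) ∩ T) ∪ ((S m ∩ T) \ (S (m+1) ∩ T))) := by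
            refine measure_mono ?_
            intro ω h
            by_cases h' : ω ∈ S (m+1) ∩ T
            · exact Or.inl h'
            · exact Or.inr ⟨h, h'⟩
        _ ≤ μ (S (m+1) ∩ T) + μ ((S m ∩ T) \ (S (m+1) ∩ T)) := measure_union_le _ _
        _ ≤ μ (S (m+1) ∩ T) + 0 := by
            gcongr
            exact le_trans (measure_mono hdiffsub) (le_of_eq hnull)
        _ = μ (S (m+1) ∩ T) := add_zero _
    -- 1-dependence: vertices below m are at distance > 1 from m+1
    have hcond : ∀ a ∈ {j : ℕ | j < m}, ∀ c ∈ ({m+1} : Set ℕ),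
        a ≠ c ∧ ¬halfLine.Adj a c := by
      intro a ha c hc
      simp only [Set.mem_setOf_eq] at ha
      simp only [Set.mem_singleton_iff] at hc
      subst hc
      refine ⟨by omega, ?_⟩
      simp only [halfLine, SimpleGraph.fromRel_adj]
      rintro ⟨-, h | h⟩ <;> omega
    have hI := hdep {j : ℕ | j < m} {m+1} hcond
    rw [ProbabilityTheory.indepFun_iff_measure_inter_preimage_eq_mul] at hI
    have hs : MeasurableSet {x : ↥{j : ℕ | j < m} → Bool | ∀ a, x a = false} := by
      have h : {x : ↥{j : ℕ | j < m} → Bool | ∀ a, x a = false} =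
          ⋂ a, (fun x : ↥{j : ℕ | j < m} → Bool => x a) ⁻¹' {false} := by
        ext x; simp
      rw [h]
      exact MeasurableSet.iInter (fun a => (measurable_pi_apply a) (measurableSet_singleton _))
    have ht : MeasurableSet {x : ↥({m+1} : Set ℕ) → Bool | ∀ c, x c = true} := by
      have h : {x : ↥({m+1} : Set ℕ) → Bool | ∀ c, x c = true} =
          ⋂ c, (fun x : ↥({m+1} : Set ℕ) → Bool => x c) ⁻¹' {true} := by
        ext x
        simp only [Set.mem_setOf_eq, Set.mem_iInter, Set.mem_preimage, Set.mem_singleton_iff]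
      rw [h]
      exact MeasurableSet.iInter (fun c => (measurable_pi_apply c) (measurableSet_singleton _))
    have hIeq := hI _ _ hs ht
    have hpre1 : (fun ω (a : ↥{j : ℕ | j < m}) => J a.1 ω) ⁻¹'
        {x | ∀ a, x a = false} = S m := by
      ext ω
      simp [hSdef, Subtype.forall]
    have hpre2 : (fun ω (c : ↥({m+1} : Set ℕ)) => J c.1 ω) ⁻¹'
        {x | ∀ c, x c = true} = T := by
      ext ω
      simp only [Set.mem_preimage, Set.mem_setOf_eq, Subtype.forall, Set.mem_singleton_iff,
        hTdef]
      constructor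
      · intro h; exact h (m+1) rfl
      · intro h a ha; subst ha; exact h
    rw [hpre1, hpre2] at hIeq
    rw [hA, hB, hIeq]
  have hrec : ∀ k, 2 ≤ k → b k = b (k - 1) - p * b (k - 2) := by
    intro k hk
    obtain ⟨m, rfl⟩ : ∃ m, k = m + 2 := ⟨k - 2, by omega⟩
    have hkey := key m
    have h1 : (μ (S (m+1))).toReal =
        (μ (S (m+2))).toReal + (μ (S m)).toReal * (μ {ω | J (m+1) ω = true}).toReal := by
      rw [hkey, ENNReal.toReal_add (measure_ne_top μ _)
        (ENNReal.mul_ne_top (measure_ne_top μ _) (measure_ne_top μ _)), ENNReal.toReal_mul]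
    rw [hmarg (m+1)] at h1
    have e1 : m + 2 - 1 = m + 1 := by omega
    have e2 : m + 2 - 2 = m := by omega
    rw [e1, e2, hb' (m+2), hb' (m+1), hb' m]
    linarith
  have hb1 : b 1 = 1 - p := by
    rw [hb' 1]
    have h : S 1 = {ω | J 0 ω = true}ᶜ := by
      ext ω
      simp [hSdef, Nat.lt_one_iff]
    rw [h, measure_compl (hT 0) (measure_ne_top μ _), measure_univ,
      ENNReal.toReal_sub_of_le prob_le_one ENNReal.one_ne_top, ENNReal.toReal_one, hmarg 0]
  have hb2 : b 2 = 1 - 2 * p := by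
    have h := hrec 2 (by norm_num)
    norm_num at h
    rw [hb1, hb0] at h
    linarith
  have hb3 : b 3 = 1 - 3 * p + p ^ 2 := by
    have h := hrec 3 (by norm_num)
    norm_num at h
    rw [hb1, hb2] at h
    rw [h]; ring
  have hb4 : b 4 = 1 - 4 * p + 3 * p ^ 2 := by
    have h := hrec 4 (by norm_num)
    norm_num at h
    rw [hb2, hb3] at h
    rw [h]; ring
  exact ⟨hb1, hrec, hb2, hb3, hb4⟩
end

section
/- Let X = (X_n)_{n∈ℤ} be a 1-dependent proper 4-coloring of ℤ whose law is invariant under all permutations of the 4 colors, under translations of ℤ, and under reflection of ℤ. For a word x_1...x_k of colors, write P(x_1...x_k) := P(X_1 = x_1, ..., X_k = x_k), and set α := 48·P(1212). Assume the length-4 cylinder probabilities satisfy P(1213) = (1 − α)/96, P(1231) = 1/96, and P(1234) = (1 + α)/96. Then the length-5 cylinder probabilities are uniquely determined: P(12134) = 1/288, P(12314) = 5/1152, P(12324) = 1/288, P(12341) = (1 + 4α)/384, P(12131) = (5 − 12α)/1152, P(12123) = 1/576, P(12132) = 1/384, P(12312) = 1/288, P(12321) = (1 − 2α)/192, and P(12121)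 = (6α − 1)/288. -/
open MeasureTheory ProbabilityTheory

/-- The bi-infinite path graph on `ℤ`: `n` is adjacent to `n + 1`. -/
def zPath : SimpleGraph ℤ := SimpleGraph.fromRel (fun m n => n = m + 1)

/-- The cylinder probability `P(w) = P(X_1 = w_1, …, X_k = w_k)` of a word
`w` of colors (colors `1, 2, 3, 4` are represented by `0, 1, 2, 3 : Fin 4`). -/
noncomputable def cyl {Ω : Type*} [MeasurableSpace Ω] (μ : Measure Ω)
    (X : ℤ → Ω → Fin 4) (w : List (Fin 4)) : ℝ :=
  (μ {ω | ∀ i : Fin w.length, X ((i : ℕ) + 1 : ℤ) ω = w.get i}).toReal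

/-!
Every length-5 cylinder probability satisfies a linear relation obtained by summing over the
colour of one site: by 1-dependence such a sum factorises, e.g. `∑ₓ P(12x34) = P(12) P(34)`, and
`∑ₓ P(1212x) = P(1212)` brings in `α`. In each sum the terms with two equal adjacent colours
vanish by properness, and the remaining ones are identified with the ten target words by
permuting colours and reversing the word. Solved in a suitable order, starting from
`P(1) = 1/4`, `P(12) = 1/12`, `P(121) = 1/48`, `P(123) = 1/32` (found the same way), these
relations give the stated values.
-/

theorem zPath_adj {m n : ℤ} : zPath.Adj m n ↔ n = m + 1 ∨ m = n + 1 := by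
  simp only [zPath, SimpleGraph.fromRel_adj, ne_eq]
  omega

section WordEvent

variable {Ω α : Type*}

def wordEvent (X : ℤ → Ω → α) : ℤ → List α → Set Ω
  | _, [] => Set.univ
  | k, a :: w => {ω | X k ω = a} ∩ wordEvent X (k + 1) w

variable (X : ℤ → Ω → α)

@[simp]
theorem wordEvent_nil (k : ℤ) : wordEvent X k [] = Set.univ := rfl

theorem wordEvent_cons (k : ℤ) (a : α) (w : List α) :
    wordEvent X k (a :: w) = {ω | X k ω = a} ∩ wordEvent X (k + 1) w := rfl

theorem wordEvent_append (k : ℤ) (u v : List α) :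
    wordEvent X k (u ++ v) = wordEvent X k u ∩ wordEvent X (k + u.length) v := by
  induction u generalizing k with
  | nil => simp
  | cons a u ih =>
    simp only [List.cons_append, wordEvent_cons, ih, List.length_cons, Set.inter_assoc]
    congr 3
    push_cast
    ring

theorem setOf_forall_fin_eq_wordEvent (k : ℤ) (w : List α) :
    {ω | ∀ i : Fin w.length, X (k + i) ω = w.get i} = wordEvent X k w := by
  induction w generalizing k with
  | nil => simp
  | cons a w ih =>
    ext ω
    simp only [wordEvent_cons, ← ih, Set.mem_inter_iff, Set.mem_ofPred_eq, List.length_cons,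
      Fin.forall_fin_succ, Fin.val_zero, Fin.val_succ, List.get_eq_getElem]
    simp only [Nat.cast_zero, add_zero, List.getElem_cons_zero, Nat.cast_add,
      Nat.cast_one, List.getElem_cons_succ, add_assoc, add_comm (1 : ℤ)]

theorem wordEvent_eq_preimage (k : ℤ) (w : List α) :
    wordEvent X k w = (fun ω n => X n ω) ⁻¹' wordEvent (fun n x => x n) k w := by
  induction w generalizing k with
  | nil => rfl
  | cons a w ih => simp only [wordEvent_cons, ih]; rfl

theorem wordEvent_shift (k : ℤ) (w : List α) :
    wordEvent (fun n => X (n + 1)) k w = wordEvent X (k + 1) w := by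
  induction w generalizing k with
  | nil => rfl
  | cons a w ih => simp only [wordEvent_cons, ih]

theorem wordEvent_neg (k : ℤ) (w : List α) :
    wordEvent (fun n => X (-n)) k w = wordEvent X (1 - k - w.length) w.reverse := by
  induction w generalizing k with
  | nil => rfl
  | cons a w ih =>
    have hstart : 1 - (k + 1) - (w.length : ℤ) = 1 - k - (a :: w).length := by simp; ring
    have hlast : 1 - k - ((a :: w).length : ℤ) + w.length = -k := by simp; ring
    rw [wordEvent_cons, ih, List.reverse_cons, wordEvent_append, List.length_reverse,
      wordEvent_cons, wordEvent_nil, Set.inter_univ, hstart, hlast, Set.inter_comm]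

theorem wordEvent_map {f : α → α} (hf : f.Injective) (k : ℤ) (w : List α) :
    wordEvent (fun n ω => f (X n ω)) k (w.map f) = wordEvent X k w := by
  induction w generalizing k with
  | nil => rfl
  | cons a w ih => simp only [List.map_cons, wordEvent_cons, ih, hf.eq_iff]

theorem exists_wordEvent_subset_of_not_isChain {k : ℤ} {w : List α}
    (h : ¬ w.IsChain (· ≠ ·)) : ∃ n, wordEvent X k w ⊆ {ω | X n ω = X (n + 1) ω} := by
  induction w generalizing k with
  | nil => simp at h
  | cons a w ih =>
    cases w with
    | nil => simp at h
    | cons b w =>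
      rw [List.isChain_cons_cons, not_and_or, not_not] at h
      rcases h with rfl | h
      · exact ⟨k, fun ω ⟨ha, hb, _⟩ => ha.trans hb.symm⟩
      · obtain ⟨n, hn⟩ := ih (k := k + 1) h
        exact ⟨n, Set.inter_subset_right.trans hn⟩

theorem measurableSet_comap_wordEvent [MeasurableSpace α] [MeasurableSingletonClass α]
    {A : Set ℤ} {k : ℤ} {w : List α} (hA : Set.Ico k (k + w.length) ⊆ A) :
    MeasurableSet[MeasurableSpace.comap (fun ω (a : A) => X a ω) inferInstance]
      (wordEvent X k w) := by
  induction w generalizing k with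
  | nil => exact MeasurableSet.univ
  | cons a w ih =>
    have hk : k ∈ A := hA ⟨le_rfl, by simp⟩
    refine MeasurableSet.inter ⟨(fun x : A → α => x ⟨k, hk⟩) ⁻¹' {a}, ?_, rfl⟩ (ih ?_)
    · exact measurable_pi_apply _ (measurableSet_singleton a)
    · exact (Set.Ico_subset_Ico (by omega) (by simp; omega)).trans hA

end WordEvent

section Measure

variable {Ω α : Type*} [MeasurableSpace Ω] {μ : Measure Ω} {X : ℤ → Ω → α}

theorem measure_wordEvent_eq_zero_of_not_isChain
    (hproper : ∀ u v : ℤ, zPath.Adj u v → μ {ω | X u ω = X v ω} = 0) {k : ℤ} {w : List α}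
    (h : ¬ w.IsChain (· ≠ ·)) : μ (wordEvent X k w) = 0 := by
  obtain ⟨n, hn⟩ := exists_wordEvent_subset_of_not_isChain X h (k := k)
  exact measure_mono_null hn (hproper n (n + 1) (zPath_adj.2 (Or.inl rfl)))

variable [MeasurableSpace α] [MeasurableSingletonClass α]

theorem measurableSet_wordEvent (hX : ∀ n, Measurable (X n)) (k : ℤ) (w : List α) :
    MeasurableSet (wordEvent X k w) := by
  induction w generalizing k with
  | nil => exact MeasurableSet.univ
  | cons a w ih => exact ((hX k) (measurableSet_singleton a)).inter (ih _)

theorem measure_wordEvent_eq_of_map_eq {Y : ℤ → Ω → α} (hX : ∀ n, Measurable (X n))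
    (hY : ∀ n, Measurable (Y n))
    (h : μ.map (fun ω n => X n ω) = μ.map (fun ω n => Y n ω)) (k : ℤ) (w : List α) :
    μ (wordEvent X k w) = μ (wordEvent Y k w) := by
  have hS := measurableSet_wordEvent (X := fun n (x : ℤ → α) => x n) measurable_pi_apply k w
  rw [wordEvent_eq_preimage X, wordEvent_eq_preimage Y,
    ← Measure.map_apply (measurable_pi_lambda _ hX) hS,
    ← Measure.map_apply (measurable_pi_lambda _ hY) hS, h]

theorem measure_wordEvent_add_one (hX : ∀ n, Measurable (X n))
    (hshift : μ.map (fun ω n => X (n + 1) ω) = μ.map (fun ω n => X n ω)) (k : ℤ) (w : List α) :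
    μ (wordEvent X (k + 1) w) = μ (wordEvent X k w) := by
  rw [← wordEvent_shift, measure_wordEvent_eq_of_map_eq (fun n => hX _) hX hshift]

theorem measure_wordEvent_eq_of_shift (hX : ∀ n, Measurable (X n))
    (hshift : μ.map (fun ω n => X (n + 1) ω) = μ.map (fun ω n => X n ω)) (k j : ℤ)
    (w : List α) : μ (wordEvent X k w) = μ (wordEvent X j w) := by
  suffices h : ∀ k, μ (wordEvent X k w) = μ (wordEvent X 0 w) by rw [h k, h j]
  intro k
  induction k using Int.induction_on with
  | zero => rfl
  | succ k ih => rw [measure_wordEvent_add_one hX hshift, ih]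
  | pred k ih => rw [← ih, ← measure_wordEvent_add_one hX hshift (-(k : ℤ) - 1), sub_add_cancel]

theorem measure_wordEvent_reverse (hX : ∀ n, Measurable (X n))
    (hshift : μ.map (fun ω n => X (n + 1) ω) = μ.map (fun ω n => X n ω))
    (hrefl : μ.map (fun ω n => X (-n) ω) = μ.map (fun ω n => X n ω)) (k : ℤ) (w : List α) :
    μ (wordEvent X k w.reverse) = μ (wordEvent X k w) := by
  have hneg := wordEvent_neg X 0 w
  rw [sub_zero] at hneg
  rw [measure_wordEvent_eq_of_shift hX hshift k (1 - w.length), ← hneg,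
    measure_wordEvent_eq_of_map_eq (fun n => hX _) hX hrefl,
    measure_wordEvent_eq_of_shift hX hshift 0 k]

theorem measure_wordEvent_map {f : α → α} (hf : f.Injective) (hmf : Measurable f)
    (hX : ∀ n, Measurable (X n))
    (hinv : μ.map (fun ω n => f (X n ω)) = μ.map (fun ω n => X n ω)) (k : ℤ) (w : List α) :
    μ (wordEvent X k (w.map f)) = μ (wordEvent X k w) := by
  rw [← measure_wordEvent_eq_of_map_eq (X := fun n ω => f (X n ω)) (fun n => hmf.comp (hX n))
    hX hinv, wordEvent_map X hf]

theorem sum_measure_wordEvent_append_cons [Fintype α] (hX : ∀ n, Measurable (X n)) (k : ℤ)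
    (u v : List α) :
    ∑ a, μ (wordEvent X k (u ++ a :: v)) =
      μ (wordEvent X k u ∩ wordEvent X (k + u.length + 1) v) := by
  set S := wordEvent X k u ∩ wordEvent X (k + u.length + 1) v
  have hfiber (a : α) : wordEvent X k (u ++ a :: v) = X (k + u.length) ⁻¹' {a} ∩ S := by
    rw [wordEvent_append, wordEvent_cons, Set.inter_left_comm]; rfl
  have hmeas (a : α) : MeasurableSet (X (k + u.length) ⁻¹' {a}) :=
    hX _ (measurableSet_singleton a)
  simp_rw [hfiber, ← Measure.restrict_apply (hmeas _)]
  rw [sum_measure_preimage_singleton _ fun a _ => hmeas a, Finset.coe_univ, Set.preimage_univ,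
    Measure.restrict_apply_univ]

theorem OneDependent.measure_wordEvent_inter (hdep : OneDependent zPath μ X) (k : ℤ)
    (u v : List α) :
    μ (wordEvent X k u ∩ wordEvent X (k + u.length + 1) v) =
      μ (wordEvent X k u) * μ (wordEvent X (k + u.length + 1) v) := by
  refine (hdep (Set.Iio (k + u.length)) (Set.Ici (k + u.length + 1)) ?_).meas_inter
    (measurableSet_comap_wordEvent X fun n hn => hn.2)
    (measurableSet_comap_wordEvent X fun n hn => hn.1)
  intro a ha b hb
  simp only [Set.mem_Iio, Set.mem_Ici] at ha hb
  rw [zPath_adj]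
  omega

end Measure

section Cylinder

variable {Ω : Type*} [MeasurableSpace Ω] {μ : Measure Ω} {X : ℤ → Ω → Fin 4}

theorem cyl_eq_toReal_measure_wordEvent (w : List (Fin 4)) :
    cyl μ X w = (μ (wordEvent X 1 w)).toReal := by
  simp_rw [cyl, ← setOf_forall_fin_eq_wordEvent, add_comm (1 : ℤ)]

theorem cyl_nil [IsProbabilityMeasure μ] : cyl μ X [] = 1 := by
  simp [cyl_eq_toReal_measure_wordEvent]

theorem cyl_eq_zero_of_not_isChain
    (hproper : ∀ u v : ℤ, zPath.Adj u v → μ {ω | X u ω = X v ω} = 0) {w : List (Fin 4)}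
    (h : ¬ w.IsChain (· ≠ ·)) : cyl μ X w = 0 := by
  rw [cyl_eq_toReal_measure_wordEvent, measure_wordEvent_eq_zero_of_not_isChain hproper h,
    ENNReal.toReal_zero]

theorem cyl_eq_of_map_eq (hX : ∀ n, Measurable (X n))
    (hcolor : ∀ σ : Equiv.Perm (Fin 4),
      μ.map (fun ω n => σ (X n ω)) = μ.map (fun ω n => X n ω))
    {f : Fin 4 → Fin 4} (hf : f.Injective) {w w' : List (Fin 4)} (h : w.map f = w') :
    cyl μ X w' = cyl μ X w := by
  subst h
  simp_rw [cyl_eq_toReal_measure_wordEvent]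
  rw [measure_wordEvent_map hf .of_discrete hX (hcolor (.ofBijective f hf.bijective_of_finite))]

theorem cyl_eq_of_reverse_map_eq (hX : ∀ n, Measurable (X n))
    (hcolor : ∀ σ : Equiv.Perm (Fin 4),
      μ.map (fun ω n => σ (X n ω)) = μ.map (fun ω n => X n ω))
    (hshift : μ.map (fun ω n => X (n + 1) ω) = μ.map (fun ω n => X n ω))
    (hrefl : μ.map (fun ω n => X (-n) ω) = μ.map (fun ω n => X n ω))
    {f : Fin 4 → Fin 4} (hf : f.Injective) {w w' : List (Fin 4)} (h : w.reverse.map f = w') :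
    cyl μ X w' = cyl μ X w := by
  simp_rw [cyl_eq_of_map_eq hX hcolor hf h, cyl_eq_toReal_measure_wordEvent]
  rw [measure_wordEvent_reverse hX hshift hrefl]

theorem sum_cyl_append_cons [IsFiniteMeasure μ] (hX : ∀ n, Measurable (X n))
    (u v : List (Fin 4)) :
    ∑ a, cyl μ X (u ++ a :: v) =
      (μ (wordEvent X 1 u ∩ wordEvent X (1 + u.length + 1) v)).toReal := by
  simp_rw [cyl_eq_toReal_measure_wordEvent]
  rw [← ENNReal.toReal_sum fun _ _ => measure_ne_top _ _, sum_measure_wordEvent_append_cons hX]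

theorem sum_cyl_append_singleton [IsFiniteMeasure μ] (hX : ∀ n, Measurable (X n))
    (w : List (Fin 4)) : ∑ a, cyl μ X (w ++ [a]) = cyl μ X w := by
  rw [sum_cyl_append_cons hX, wordEvent_nil, Set.inter_univ, cyl_eq_toReal_measure_wordEvent]

theorem cyl_singleton [IsProbabilityMeasure μ] (hX : ∀ n, Measurable (X n))
    (hcolor : ∀ σ : Equiv.Perm (Fin 4),
      μ.map (fun ω n => σ (X n ω)) = μ.map (fun ω n => X n ω)) (a : Fin 4) :
    cyl μ X [a] = 1 / 4 := by
  have hsum := sum_cyl_append_singleton hX (μ := μ) []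
  have hterm (b : Fin 4) : cyl μ X [b] = cyl μ X [a] :=
    cyl_eq_of_map_eq hX hcolor (Equiv.swap a b).injective (by simp)
  simp only [List.nil_append, hterm, Finset.sum_const, Finset.card_univ, Fintype.card_fin,
    nsmul_eq_mul, Nat.cast_ofNat, cyl_nil] at hsum
  linarith

theorem cyl_pair [IsProbabilityMeasure μ] (hX : ∀ n, Measurable (X n))
    (hcolor : ∀ σ : Equiv.Perm (Fin 4),
      μ.map (fun ω n => σ (X n ω)) = μ.map (fun ω n => X n ω))
    (hproper : ∀ u v : ℤ, zPath.Adj u v → μ {ω | X u ω = X v ω} = 0) {a b : Fin 4}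
    (hab : a ≠ b) : cyl μ X [a, b] = 1 / 12 := by
  have hsum := sum_cyl_append_singleton hX (μ := μ) [a]
  have hterm (c : Fin 4) : cyl μ X [a, c] = if c = a then 0 else cyl μ X [a, b] := by
    split_ifs with hc
    · exact cyl_eq_zero_of_not_isChain hproper (by simp [hc])
    · exact cyl_eq_of_map_eq hX hcolor (Equiv.swap b c).injective
        (by simp [Equiv.swap_apply_of_ne_of_ne hab (Ne.symm hc)])
  simp only [List.singleton_append, cyl_singleton hX hcolor] at hsum
  rw [Finset.sum_congr rfl fun c _ => hterm c, Finset.sum_ite, Finset.sum_const_zero,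
    Finset.sum_const, Finset.filter_ne', Finset.card_erase_of_mem (Finset.mem_univ a)] at hsum
  simp only [Finset.card_univ, Fintype.card_fin, Nat.add_one_sub_one, nsmul_eq_mul,
    Nat.cast_ofNat, zero_add] at hsum
  linarith

end Cylinder

structure IsStationaryOneDepColoring {Ω : Type*} [MeasurableSpace Ω] (μ : Measure Ω)
    (X : ℤ → Ω → Fin 4) : Prop where
  measurable : ∀ n, Measurable (X n)
  proper : ∀ u v : ℤ, zPath.Adj u v → μ {ω | X u ω = X v ω} = 0
  oneDependent : OneDependent zPath μ X
  color_invariant : ∀ σ : Equiv.Perm (Fin 4),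
    μ.map (fun ω n => σ (X n ω)) = μ.map (fun ω n => X n ω)
  shift_invariant : μ.map (fun ω n => X (n + 1) ω) = μ.map (fun ω n => X n ω)

namespace IsStationaryOneDepColoring

variable {Ω : Type*} [MeasurableSpace Ω] {μ : Measure Ω} {X : ℤ → Ω → Fin 4}
  (hX : IsStationaryOneDepColoring μ X)
include hX

theorem cyl_eq_of_map_eq {f : Fin 4 → Fin 4} (hf : f.Injective) {w w' : List (Fin 4)}
    (h : w.map f = w') : cyl μ X w' = cyl μ X w :=
  _root_.cyl_eq_of_map_eq hX.measurable hX.color_invariant hf h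

theorem cyl_eq_of_reverse_map_eq
    (hrefl : μ.map (fun ω n => X (-n) ω) = μ.map (fun ω n => X n ω)) {f : Fin 4 → Fin 4}
    (hf : f.Injective) {w w' : List (Fin 4)} (h : w.reverse.map f = w') :
    cyl μ X w' = cyl μ X w :=
  _root_.cyl_eq_of_reverse_map_eq hX.measurable hX.color_invariant hX.shift_invariant hrefl hf h

theorem sum_cyl_append_cons [IsFiniteMeasure μ] (u v : List (Fin 4)) :
    ∑ a, cyl μ X (u ++ a :: v) = cyl μ X u * cyl μ X v := by
  rw [_root_.sum_cyl_append_cons hX.measurable, hX.oneDependent.measure_wordEvent_inter,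
    ENNReal.toReal_mul,
    measure_wordEvent_eq_of_shift hX.measurable hX.shift_invariant (1 + u.length + 1) 1,
    ← cyl_eq_toReal_measure_wordEvent, ← cyl_eq_toReal_measure_wordEvent]

variable [IsProbabilityMeasure μ]

-- Lemma names spell the word in the paper's colours `1, …, 4`, i.e. shifted by one.
theorem cyl_121 : cyl μ X [0, 1, 0] = 1 / 48 := by
  have hsum := hX.sum_cyl_append_cons [0] [0]
  have h2 : cyl μ X [0, 2, 0] = cyl μ X [0, 1, 0] :=
    hX.cyl_eq_of_map_eq (Equiv.swap 1 2).injective (by decide)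
  have h3 : cyl μ X [0, 3, 0] = cyl μ X [0, 1, 0] :=
    hX.cyl_eq_of_map_eq (Equiv.swap 1 3).injective (by decide)
  simp (disch := decide) only [Fin.sum_univ_four, List.cons_append, List.nil_append,
    cyl_eq_zero_of_not_isChain hX.proper, cyl_singleton hX.measurable hX.color_invariant] at hsum
  linarith

theorem cyl_123 : cyl μ X [0, 1, 2] = 1 / 32 := by
  have hsum := hX.sum_cyl_append_cons [0] [1]
  have h2 : cyl μ X [0, 2, 1] = cyl μ X [0, 1, 2] :=
    hX.cyl_eq_of_map_eq (Equiv.swap 1 2).injective (by decide)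
  have h3 : cyl μ X [0, 3, 1] = cyl μ X [0, 1, 2] :=
    hX.cyl_eq_of_map_eq (f := ![0, 3, 1, 2]) (by decide) (by decide)
  simp (disch := decide) only [Fin.sum_univ_four, List.cons_append, List.nil_append,
    cyl_eq_zero_of_not_isChain hX.proper, cyl_singleton hX.measurable hX.color_invariant] at hsum
  linarith

theorem cyl_12132 : cyl μ X [0, 1, 0, 2, 1] = 1 / 384 := by
  have hsum := hX.sum_cyl_append_cons [0, 1, 0] [1]
  have h3 : cyl μ X [0, 1, 0, 3, 1] = cyl μ X [0, 1, 0, 2, 1] :=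
    hX.cyl_eq_of_map_eq (Equiv.swap 2 3).injective (by decide)
  simp (disch := decide) only [Fin.sum_univ_four, List.cons_append, List.nil_append,
    cyl_eq_zero_of_not_isChain hX.proper, cyl_singleton hX.measurable hX.color_invariant,
    hX.cyl_121] at hsum
  linarith

theorem cyl_12312 : cyl μ X [0, 1, 2, 0, 1] = 1 / 288 := by
  have hsum := hX.sum_cyl_append_cons [0, 1] [0, 1]
  have h3 : cyl μ X [0, 1, 3, 0, 1] = cyl μ X [0, 1, 2, 0, 1] :=
    hX.cyl_eq_of_map_eq (Equiv.swap 2 3).injective (by decide)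
  simp (disch := decide) only [Fin.sum_univ_four, List.cons_append, List.nil_append,
    cyl_eq_zero_of_not_isChain hX.proper,
    cyl_pair hX.measurable hX.color_invariant hX.proper] at hsum
  linarith

section Reflection

variable (hrefl : μ.map (fun ω n => X (-n) ω) = μ.map (fun ω n => X n ω))
include hrefl

theorem cyl_12134 : cyl μ X [0, 1, 0, 2, 3] = 1 / 288 := by
  have hsum := hX.sum_cyl_append_cons [0, 1] [2, 3]
  have h3 : cyl μ X [0, 1, 3, 2, 3] = cyl μ X [0, 1, 0, 2, 3] :=
    hX.cyl_eq_of_reverse_map_eq hrefl Fin.rev_injective (by decide)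
  simp (disch := decide) only [Fin.sum_univ_four, List.cons_append, List.nil_append,
    cyl_eq_zero_of_not_isChain hX.proper,
    cyl_pair hX.measurable hX.color_invariant hX.proper] at hsum
  linarith

theorem cyl_12314 : cyl μ X [0, 1, 2, 0, 3] = 5 / 1152 := by
  have hsum := hX.sum_cyl_append_cons [0, 1] [0, 2]
  have h2 : cyl μ X [0, 1, 2, 0, 2] = cyl μ X [0, 1, 0, 2, 1] :=
    hX.cyl_eq_of_reverse_map_eq hrefl (f := ![2, 0, 1, 3]) (by decide) (by decide)
  have h3 : cyl μ X [0, 1, 3, 0, 2] = cyl μ X [0, 1, 2, 0, 3] :=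
    hX.cyl_eq_of_map_eq (Equiv.swap 2 3).injective (by decide)
  simp (disch := decide) only [Fin.sum_univ_four, List.cons_append, List.nil_append,
    cyl_eq_zero_of_not_isChain hX.proper,
    cyl_pair hX.measurable hX.color_invariant hX.proper] at hsum
  linarith [hX.cyl_12132]

theorem cyl_12123 : cyl μ X [0, 1, 0, 1, 2] = 1 / 576 := by
  have hsum := hX.sum_cyl_append_cons [0, 1, 0] [2]
  have h3 : cyl μ X [0, 1, 0, 3, 2] = cyl μ X [0, 1, 0, 2, 3] :=
    hX.cyl_eq_of_map_eq (Equiv.swap 2 3).injective (by decide)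
  simp (disch := decide) only [Fin.sum_univ_four, List.cons_append, List.nil_append,
    cyl_eq_zero_of_not_isChain hX.proper, cyl_singleton hX.measurable hX.color_invariant,
    hX.cyl_121] at hsum
  linarith [hX.cyl_12134 hrefl]

theorem cyl_12324 : cyl μ X [0, 1, 2, 1, 3] = 1 / 288 := by
  have hsum := hX.sum_cyl_append_cons [0, 1] [1, 2]
  have h2 : cyl μ X [0, 1, 2, 1, 2] = cyl μ X [0, 1, 0, 1, 2] :=
    hX.cyl_eq_of_reverse_map_eq hrefl (Equiv.swap 0 2).injective (by decide)
  have h3 : cyl μ X [0, 1, 3, 1, 2] = cyl μ X [0, 1, 2, 1, 3] :=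
    hX.cyl_eq_of_map_eq (Equiv.swap 2 3).injective (by decide)
  simp (disch := decide) only [Fin.sum_univ_four, List.cons_append, List.nil_append,
    cyl_eq_zero_of_not_isChain hX.proper,
    cyl_pair hX.measurable hX.color_invariant hX.proper] at hsum
  linarith [hX.cyl_12123 hrefl]

theorem cyl_12121 : cyl μ X [0, 1, 0, 1, 0] = cyl μ X [0, 1, 0, 1] - 1 / 288 := by
  have hsum := sum_cyl_append_singleton hX.measurable (μ := μ) [0, 1, 0, 1]
  have h3 : cyl μ X [0, 1, 0, 1, 3] = cyl μ X [0, 1, 0, 1, 2] :=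
    hX.cyl_eq_of_map_eq (Equiv.swap 2 3).injective (by decide)
  simp (disch := decide) only [Fin.sum_univ_four, List.cons_append, List.nil_append,
    cyl_eq_zero_of_not_isChain hX.proper] at hsum
  linarith [hX.cyl_12123 hrefl]

theorem cyl_12321 : cyl μ X [0, 1, 2, 1, 0] = 1 / 192 - cyl μ X [0, 1, 0, 1] / 2 := by
  have hsum := hX.sum_cyl_append_cons [0, 1] [1, 0]
  have h3 : cyl μ X [0, 1, 3, 1, 0] = cyl μ X [0, 1, 2, 1, 0] :=
    hX.cyl_eq_of_map_eq (Equiv.swap 2 3).injective (by decide)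
  simp (disch := decide) only [Fin.sum_univ_four, List.cons_append, List.nil_append,
    cyl_eq_zero_of_not_isChain hX.proper,
    cyl_pair hX.measurable hX.color_invariant hX.proper] at hsum
  linarith [hX.cyl_12121 hrefl]

theorem cyl_12341 : cyl μ X [0, 1, 2, 3, 0] = 1 / 384 + cyl μ X [0, 1, 0, 1] / 2 := by
  have hsum := hX.sum_cyl_append_cons [0, 1, 2] [0]
  simp (disch := decide) only [Fin.sum_univ_four, List.cons_append, List.nil_append,
    cyl_eq_zero_of_not_isChain hX.proper, cyl_singleton hX.measurable hX.color_invariant,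
    hX.cyl_123] at hsum
  linarith [hX.cyl_12321 hrefl]

theorem cyl_12131 : cyl μ X [0, 1, 0, 2, 0] = 5 / 1152 - cyl μ X [0, 1, 0, 1] / 2 := by
  have hsum := hX.sum_cyl_append_cons [0, 1] [2, 0]
  have h3 : cyl μ X [0, 1, 3, 2, 0] = cyl μ X [0, 1, 2, 3, 0] :=
    hX.cyl_eq_of_map_eq (Equiv.swap 2 3).injective (by decide)
  simp (disch := decide) only [Fin.sum_univ_four, List.cons_append, List.nil_append,
    cyl_eq_zero_of_not_isChain hX.proper,
    cyl_pair hX.measurable hX.color_invariant hX.proper] at hsum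
  linarith [hX.cyl_12341 hrefl]

end Reflection

end IsStationaryOneDepColoring

theorem length_five_cylinders_general
    (Ω : Type) [MeasurableSpace Ω] (μ : Measure Ω) [IsProbabilityMeasure μ]
    (X : ℤ → Ω → Fin 4) (hmeas : ∀ n, Measurable (X n))
    (hproper : ∀ u v : ℤ, zPath.Adj u v → μ {ω | X u ω = X v ω} = 0)
    (hdep : OneDependent zPath μ X)
    (hcolor : ∀ σ : Equiv.Perm (Fin 4),
      Measure.map (fun ω (n : ℤ) => σ (X n ω)) μ
        = Measure.map (fun ω (n : ℤ) => X n ω) μ)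
    (htrans : Measure.map (fun ω (n : ℤ) => X (n + 1) ω) μ
        = Measure.map (fun ω (n : ℤ) => X n ω) μ)
    (hrefl : Measure.map (fun ω (n : ℤ) => X (-n) ω) μ
        = Measure.map (fun ω (n : ℤ) => X n ω) μ)
    (α : ℝ) (hα : α = 48 * cyl μ X ([0, 1, 0, 1] : List (Fin 4))) :
    cyl μ X ([0, 1, 0, 2, 3] : List (Fin 4)) = 1 / 288 ∧
    cyl μ X ([0, 1, 2, 0, 3] : List (Fin 4)) = 5 / 1152 ∧
    cyl μ X ([0, 1, 2, 1, 3] : List (Fin 4)) = 1 / 288 ∧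
    cyl μ X ([0, 1, 2, 3, 0] : List (Fin 4)) = (1 + 4 * α) / 384 ∧
    cyl μ X ([0, 1, 0, 2, 0] : List (Fin 4)) = (5 - 12 * α) / 1152 ∧
    cyl μ X ([0, 1, 0, 1, 2] : List (Fin 4)) = 1 / 576 ∧
    cyl μ X ([0, 1, 0, 2, 1] : List (Fin 4)) = 1 / 384 ∧
    cyl μ X ([0, 1, 2, 0, 1] : List (Fin 4)) = 1 / 288 ∧
    cyl μ X ([0, 1, 2, 1, 0] : List (Fin 4)) = (1 - 2 * α) / 192 ∧
    cyl μ X ([0, 1, 0, 1, 0] : List (Fin 4)) = (6 * α - 1) / 288 := by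
  have hX : IsStationaryOneDepColoring μ X := ⟨hmeas, hproper, hdep, hcolor, htrans⟩
  have h1212 : cyl μ X [0, 1, 0, 1] = α / 48 := by rw [hα]; ring
  refine ⟨hX.cyl_12134 hrefl, hX.cyl_12314 hrefl, hX.cyl_12324 hrefl, ?_, ?_,
    hX.cyl_12123 hrefl, hX.cyl_12132, hX.cyl_12312, ?_, ?_⟩
  · rw [hX.cyl_12341 hrefl, h1212]; ring
  · rw [hX.cyl_12131 hrefl, h1212]; ring
  · rw [hX.cyl_12321 hrefl, h1212]; ring
  · rw [hX.cyl_12121 hrefl, h1212]; ring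

/-- For a 1-dependent proper 4-coloring of `ℤ` invariant under color
permutations, translations and reflection, with `α := 48 P(1212)` and the length-4
cylinder probabilities `P(1213) = (1-α)/96`, `P(1231) = 1/96`, `P(1234) = (1+α)/96`,
the length-5 cylinder probabilities are uniquely determined as stated.
(Colors `1,2,3,4` are represented by `0,1,2,3 : Fin 4`.) -/
theorem length_five_cylinders
    (Ω : Type) [MeasurableSpace Ω] (μ : Measure Ω) [IsProbabilityMeasure μ]
    (X : ℤ → Ω → Fin 4) (hmeas : ∀ n, Measurable (X n))
    (hproper : ∀ u v : ℤ, zPath.Adj u v → μ {ω | X u ω = X v ω} = 0)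
    (hdep : OneDependent zPath μ X)
    (hcolor : ∀ σ : Equiv.Perm (Fin 4),
      Measure.map (fun ω (n : ℤ) => σ (X n ω)) μ
        = Measure.map (fun ω (n : ℤ) => X n ω) μ)
    (htrans : Measure.map (fun ω (n : ℤ) => X (n + 1) ω) μ
        = Measure.map (fun ω (n : ℤ) => X n ω) μ)
    (hrefl : Measure.map (fun ω (n : ℤ) => X (-n) ω) μ
        = Measure.map (fun ω (n : ℤ) => X n ω) μ)
    (α : ℝ) (hα : α = 48 * cyl μ X ([0, 1, 0, 1] : List (Fin 4)))
    (h1213 : cyl μ X ([0, 1, 0, 2] : List (Fin 4)) = (1 - α) / 96)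
    (h1231 : cyl μ X ([0, 1, 2, 0] : List (Fin 4)) = 1 / 96)
    (h1234 : cyl μ X ([0, 1, 2, 3] : List (Fin 4)) = (1 + α) / 96) :
    cyl μ X ([0, 1, 0, 2, 3] : List (Fin 4)) = 1 / 288 ∧
    cyl μ X ([0, 1, 2, 0, 3] : List (Fin 4)) = 5 / 1152 ∧
    cyl μ X ([0, 1, 2, 1, 3] : List (Fin 4)) = 1 / 288 ∧
    cyl μ X ([0, 1, 2, 3, 0] : List (Fin 4)) = (1 + 4 * α) / 384 ∧
    cyl μ X ([0, 1, 0, 2, 0] : List (Fin 4)) = (5 - 12 * α) / 1152 ∧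
    cyl μ X ([0, 1, 0, 1, 2] : List (Fin 4)) = 1 / 576 ∧
    cyl μ X ([0, 1, 0, 2, 1] : List (Fin 4)) = 1 / 384 ∧
    cyl μ X ([0, 1, 2, 0, 1] : List (Fin 4)) = 1 / 288 ∧
    cyl μ X ([0, 1, 2, 1, 0] : List (Fin 4)) = (1 - 2 * α) / 192 ∧
    cyl μ X ([0, 1, 0, 1, 0] : List (Fin 4)) = (6 * α - 1) / 288 :=
  length_five_cylinders_general Ω μ X hmeas hproper hdep hcolor htrans hrefl α hα
end
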